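/- arXiv:1804.09752 — 7 statements merged into one kernel-verified Lean document; each statement's English description precedes it below -/
import Mathlib

section
/- In the example instance, the explicitly given point P lies in the polytope Q: P satisfies the initial conditions, all flow-conservation equations for the CY- and B-variables, all linking equations between the CY-, B- and DY-variables, and every coordinate of P lies in the interval [0,1]. -/
open Finset

/-- A point of the LP relaxation: `CY t d h1 h2`, `B t g1 g2`, `DY t d h g`,
with times in `Fin (T+1)`, dike heights in `Fin n`, barrier heights in `Fin m`. -/
structure DikePoint (T n m : ℕ) (D : Type) where
  CY : Fin (T + 1) → D → Fin n → Fin n → ℝ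
  B : Fin (T + 1) → Fin m → Fin m → ℝ
  DY : Fin (T + 1) → D → Fin n → Fin m → ℝ

/-- Membership in the polytope `Q`: box constraints, support only on
nondecreasing height pairs, initial conditions, flow conservation, and the
linking constraints. -/
def memQ {T n m : ℕ} {D : Type} [Fintype D] [NeZero n] [NeZero m]
    (x : DikePoint T n m D) : Prop :=
  (∀ t d h1 h2, x.CY t d h1 h2 ∈ Set.Icc (0 : ℝ) 1) ∧
  (∀ t g1 g2, x.B t g1 g2 ∈ Set.Icc (0 : ℝ) 1) ∧
  (∀ t d h g, x.DY t d h g ∈ Set.Icc (0 : ℝ) 1) ∧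
  (∀ t d h1 h2, ¬ h1 ≤ h2 → x.CY t d h1 h2 = 0) ∧
  (∀ t g1 g2, ¬ g1 ≤ g2 → x.B t g1 g2 = 0) ∧
  (∀ d, x.CY 0 d 0 0 = 1) ∧
  (∀ d h1 h2, 0 < h2 → x.CY 0 d h1 h2 = 0) ∧
  (x.B 0 0 0 = 1) ∧
  (∀ g1 g2, 0 < g2 → x.B 0 g1 g2 = 0) ∧
  (∀ (t : Fin T) (d : D) (h : Fin n),
    ∑ h1 ∈ Iic h, x.CY t.castSucc d h1 h = ∑ h3 ∈ Ici h, x.CY t.succ d h h3) ∧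
  (∀ t d (h : Fin n), ∑ h1 ∈ Iic h, x.CY t d h1 h = ∑ g : Fin m, x.DY t d h g) ∧
  (∀ (t : Fin T) (g : Fin m),
    ∑ g1 ∈ Iic g, x.B t.castSucc g1 g = ∑ g3 ∈ Ici g, x.B t.succ g g3) ∧
  (∀ t (d : D) (g : Fin m), ∑ g1 ∈ Iic g, x.B t g1 g = ∑ h : Fin n, x.DY t d h g)

/-- A point is integral if every coordinate is `0` or `1`. -/
def isIntegral {T n m : ℕ} {D : Type} (x : DikePoint T n m D) : Prop :=
  (∀ t d h1 h2, x.CY t d h1 h2 = 0 ∨ x.CY t d h1 h2 = 1) ∧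
  (∀ t g1 g2, x.B t g1 g2 = 0 ∨ x.B t g1 g2 = 1) ∧
  (∀ t d h g, x.DY t d h g = 0 ∨ x.DY t d h g = 1)

/-- The linear objective function of the LP relaxation. -/
def obj {T n m : ℕ} {D : Type} [Fintype D]
    (Dcost : Fin (T + 1) → D → Fin n → Fin n → ℝ)
    (Dexp : Fin (T + 1) → D → Fin n → Fin m → ℝ)
    (Bcost : Fin (T + 1) → Fin m → Fin m → ℝ)
    (Bexp : Fin (T + 1) → Fin m → ℝ)
    (x : DikePoint T n m D) : ℝ :=
  (∑ t, ∑ d, ∑ h2, ∑ h1 ∈ Iic h2, Dcost t d h1 h2 * x.CY t d h1 h2) +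
  (∑ t, ∑ d, ∑ h, ∑ g, Dexp t d h g * x.DY t d h g) +
  (∑ t, ∑ g2, ∑ g1 ∈ Iic g2, (Bcost t g1 g2 + Bexp t g2) * x.B t g1 g2)

/-- Condition (i). -/
def condI {T n m : ℕ} {D : Type}
    (Dexp : Fin (T + 1) → D → Fin n → Fin m → ℝ) : Prop :=
  ∀ (t : Fin (T + 1)) (d : D) (h h' : Fin n) (g g' : Fin m), h ≤ h' → g ≤ g' →
    Dexp t d h g + Dexp t d h' g' ≤ Dexp t d h' g + Dexp t d h g'

/-- Condition (ii). -/
def condII {T m : ℕ}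
    (Bcost : Fin (T + 1) → Fin m → Fin m → ℝ) : Prop :=
  ∀ (t : Fin (T + 1)) (g1 g1' g2 g2' : Fin m), g1 ≤ g1' → g1' ≤ g2 → g2 ≤ g2' →
    Bcost t g1 g2 + Bcost t g1' g2' ≤ Bcost t g1 g2' + Bcost t g1' g2

/-- Condition (iii). -/
def condIII {T n : ℕ} {D : Type}
    (Dcost : Fin (T + 1) → D → Fin n → Fin n → ℝ) : Prop :=
  ∀ (t : Fin (T + 1)) (d : D) (h1 h1' h2 h2' : Fin n), h1 ≤ h1' → h1' ≤ h2 → h2 ≤ h2' →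
    Dcost t d h1 h2 + Dcost t d h1' h2' ≤ Dcost t d h1 h2' + Dcost t d h1' h2

/-- The example point `P` (example instance: `T = 2`, one dike segment,
two dike heights, two barrier heights). -/
noncomputable def P : DikePoint 2 2 2 Unit where
  CY := fun t _ h1 h2 =>
    if t = 0 then (if h1 = 0 ∧ h2 = 0 then 1 else 0)
    else if t = 1 then (if h1 = 0 then 1 / 2 else 0)
    else (if h1 = h2 then 1 / 2 else 0)
  B := fun t g1 g2 =>
    if t = 0 then (if g1 = 0 ∧ g2 = 0 then 1 else 0)
    else if t = 1 then (if g1 = 0 then 1 / 2 else 0)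
    else (if g1 = g2 then 1 / 2 else 0)
  DY := fun t _ h g =>
    if t = 0 then (if h = 0 ∧ g = 0 then 1 else 0)
    else if t = 1 then (if h ≠ g then 1 / 2 else 0)
    else (if h = g then 1 / 2 else 0)

lemma Iic_zero_fin_two : Iic (0 : Fin 2) = {0} := rfl

lemma Iic_one_fin_two : Iic (1 : Fin 2) = {0, 1} := rfl

lemma Ici_one_fin_two : Ici (1 : Fin 2) = {1} := rfl

lemma P_CY_mem_Icc (t : Fin 3) (d : Unit) (h1 h2 : Fin 2) :
    P.CY t d h1 h2 ∈ Set.Icc (0 : ℝ) 1 := by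
  simp only [P]; split_ifs <;> norm_num

lemma P_B_mem_Icc (t : Fin 3) (g1 g2 : Fin 2) : P.B t g1 g2 ∈ Set.Icc (0 : ℝ) 1 := by
  simp only [P]; split_ifs <;> norm_num

lemma P_DY_mem_Icc (t : Fin 3) (d : Unit) (h g : Fin 2) :
    P.DY t d h g ∈ Set.Icc (0 : ℝ) 1 := by
  simp only [P]; split_ifs <;> norm_num

lemma P_CY_eq_zero_of_not_le (t : Fin 3) (d : Unit) {h1 h2 : Fin 2} (h : ¬ h1 ≤ h2) :
    P.CY t d h1 h2 = 0 := by
  fin_cases t <;> fin_cases h1 <;> fin_cases h2 <;> simp_all [P]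

lemma P_B_eq_zero_of_not_le (t : Fin 3) {g1 g2 : Fin 2} (h : ¬ g1 ≤ g2) :
    P.B t g1 g2 = 0 := by
  fin_cases t <;> fin_cases g1 <;> fin_cases g2 <;> simp_all [P]

lemma P_CY_zero_eq_zero_of_pos (d : Unit) (h1 : Fin 2) {h2 : Fin 2} (h : 0 < h2) :
    P.CY 0 d h1 h2 = 0 := by
  simp [P, h.ne']

lemma P_B_zero_eq_zero_of_pos (g1 : Fin 2) {g2 : Fin 2} (h : 0 < g2) : P.B 0 g1 g2 = 0 := by
  simp [P, h.ne']

lemma P_CY_flow (t : Fin 2) (d : Unit) (h : Fin 2) :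
    ∑ h1 ∈ Iic h, P.CY t.castSucc d h1 h = ∑ h3 ∈ Ici h, P.CY t.succ d h h3 := by
  fin_cases t <;> fin_cases h <;>
    simp [P, Iic_zero_fin_two, Iic_one_fin_two, Ici_one_fin_two]

lemma P_B_flow (t : Fin 2) (g : Fin 2) :
    ∑ g1 ∈ Iic g, P.B t.castSucc g1 g = ∑ g3 ∈ Ici g, P.B t.succ g g3 := by
  fin_cases t <;> fin_cases g <;>
    simp [P, Iic_zero_fin_two, Iic_one_fin_two, Ici_one_fin_two]

lemma P_CY_link (t : Fin 3) (d : Unit) (h : Fin 2) :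
    ∑ h1 ∈ Iic h, P.CY t d h1 h = ∑ g, P.DY t d h g := by
  fin_cases t <;> fin_cases h <;> simp [P, Iic_zero_fin_two, Iic_one_fin_two]

lemma P_B_link (t : Fin 3) (d : Unit) (g : Fin 2) :
    ∑ g1 ∈ Iic g, P.B t g1 g = ∑ h, P.DY t d h g := by
  fin_cases t <;> fin_cases g <;> simp [P, Iic_zero_fin_two, Iic_one_fin_two]

/-- the point `P` lies in the polytope `Q`. -/
theorem statement_0 : memQ P :=
  ⟨P_CY_mem_Icc, P_B_mem_Icc, P_DY_mem_Icc,
    fun t d _ _ => P_CY_eq_zero_of_not_le t d, fun t _ _ => P_B_eq_zero_of_not_le t,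
    fun _ => by simp [P], fun d h1 _ => P_CY_zero_eq_zero_of_pos d h1,
    by simp [P], fun g1 _ => P_B_zero_eq_zero_of_pos g1,
    P_CY_flow, P_CY_link, P_B_flow, P_B_link⟩
end

section
/- (Proposition 1.) Suppose the cost data satisfy conditions (i), (ii) and (iii). Then the LP relaxation has an integral optimal solution: there exists an integral point x* ∈ Q such that obj(x*) ≤ obj(y) for every y ∈ Q. -/
/-!
Every point `y ∈ Q` is dominated by an average of integral points. Read `CY(·, d, ·, ·)` and `B` as
flows of probability mass through nondecreasing heights, and let `S_t(a)` be the mass at heights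
`≥ a` at time `t`; it is nondecreasing in `t`. Cutting all these survival functions at one common
level `u ∈ (0, 1]` gives nondecreasing height paths starting at `0`, that is, an integral point
`z_u ∈ Q`, and averaging `z_u` over `u` couples every pair of marginals comonotonically.
Conditions (i)-(iii) say that the costs are Monge. Summation by parts writes the cost of a coupling
with fixed marginals as `∑ Δc(a, b) · (mass of the quadrant [a, ∞) × [b, ∞))`, with `Δc ≤ 0`, and
the comonotone coupling has the largest quadrant masses (the Fréchet bound `min`). Hence the average
of `obj(z_u)` is at most `obj(y)`, so some `z_u` is at least as good as `y`, and the best of the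
finitely many integral path points is optimal.
-/

open Finset

section UpperTail

theorem sum_range_mul_eq_by_parts (c σ : ℕ → ℝ) (N : ℕ) :
    ∑ a ∈ range N, c a * σ a =
      c 0 * ∑ a ∈ range N, σ a +
        ∑ i ∈ range N, (c (i + 1) - c i) * ∑ a ∈ Ico (i + 1) N, σ a := by
  have hc : ∀ a, c a = c 0 + ∑ i ∈ range a, (c (i + 1) - c i) := by
    intro a
    rw [sum_range_sub]
    ring
  have hswap : ∑ a ∈ range N, ∑ i ∈ range a, (c (i + 1) - c i) * σ a =
      ∑ i ∈ range N, ∑ a ∈ Ico (i + 1) N, (c (i + 1) - c i) * σ a :=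
    sum_comm' fun a i => by simp only [mem_range, mem_Ico]; omega
  conv_lhs => enter [2, a]; rw [hc a, add_mul, sum_mul]
  rw [sum_add_distrib, ← mul_sum, hswap]
  simp only [mul_sum]

variable {N M : ℕ}

def upperTail (N M : ℕ) (f : ℕ → ℕ → ℝ) (a b : ℕ) : ℝ :=
  ∑ a' ∈ Ico a N, ∑ b' ∈ Ico b M, f a' b'

lemma upperTail_zero_right (f : ℕ → ℕ → ℝ) (a : ℕ) :
    upperTail N M f a 0 = ∑ p ∈ Ico a N, ∑ q ∈ range M, f p q := by
  rw [upperTail, range_eq_Ico]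

lemma upperTail_zero_left (f : ℕ → ℕ → ℝ) (b : ℕ) :
    upperTail N M f 0 b = ∑ q ∈ Ico b M, ∑ p ∈ range N, f p q := by
  rw [upperTail, range_eq_Ico, sum_comm]

lemma sum_row_eq_upperTail_sub (f : ℕ → ℕ → ℝ) {a : ℕ} (ha : a < N) :
    ∑ b ∈ range M, f a b = upperTail N M f a 0 - upperTail N M f (a + 1) 0 := by
  rw [upperTail_zero_right, upperTail_zero_right, sum_eq_sum_Ico_succ_bot ha]
  ring

lemma sum_col_eq_upperTail_sub (f : ℕ → ℕ → ℝ) {b : ℕ} (hb : b < M) :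
    ∑ a ∈ range N, f a b = upperTail N M f 0 b - upperTail N M f 0 (b + 1) := by
  rw [upperTail_zero_left, upperTail_zero_left, sum_eq_sum_Ico_succ_bot hb]
  ring

lemma upperTail_sub (f g : ℕ → ℕ → ℝ) (a b : ℕ) :
    upperTail N M (fun a b => f a b - g a b) a b = upperTail N M f a b - upperTail N M g a b := by
  simp only [upperTail, sum_sub_distrib]

lemma upperTail_anti {f : ℕ → ℕ → ℝ} (hf : ∀ a b, 0 ≤ f a b) {a a' b b' : ℕ}
    (ha : a ≤ a') (hb : b ≤ b') : upperTail N M f a' b' ≤ upperTail N M f a b :=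
  calc upperTail N M f a' b' ≤ ∑ p ∈ Ico a' N, ∑ q ∈ Ico b M, f p q :=
        sum_le_sum fun _ _ => sum_le_sum_of_subset_of_nonneg (Ico_subset_Ico_left hb)
          fun _ _ _ => hf _ _
    _ ≤ upperTail N M f a b := sum_le_sum_of_subset_of_nonneg (Ico_subset_Ico_left ha)
          fun _ _ _ => sum_nonneg fun _ _ => hf _ _

lemma upperTail_le_min {f : ℕ → ℕ → ℝ} (hf : ∀ a b, 0 ≤ f a b) (a b : ℕ) :
    upperTail N M f a b ≤ min (upperTail N M f a 0) (upperTail N M f 0 b) :=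
  le_min (upperTail_anti hf le_rfl (Nat.zero_le b)) (upperTail_anti hf (Nat.zero_le a) le_rfl)

lemma upperTail_eq_upperTail_zero_of_le {f : ℕ → ℕ → ℝ} (htri : ∀ a b, b < a → f a b = 0)
    {a b : ℕ} (hba : b ≤ a) : upperTail N N f a b = upperTail N N f a 0 := by
  refine sum_congr rfl fun p hp => ?_
  have hpN := mem_Ico.1 hp
  rw [← sum_Ico_consecutive (f p) (Nat.zero_le b) (by omega : b ≤ N),
    sum_eq_zero (s := Ico 0 b) fun q hq => htri p q (by simp only [mem_Ico] at hq; omega), zero_add]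

lemma upperTail_zero_right_le_zero_left {f : ℕ → ℕ → ℝ} (hf : ∀ a b, 0 ≤ f a b)
    (htri : ∀ a b, b < a → f a b = 0) (a : ℕ) : upperTail N N f a 0 ≤ upperTail N N f 0 a := by
  rw [← upperTail_eq_upperTail_zero_of_le htri le_rfl]
  exact upperTail_anti hf (Nat.zero_le a) le_rfl

lemma upperTail_eq_min_of_le {f : ℕ → ℕ → ℝ} (hf : ∀ a b, 0 ≤ f a b)
    (htri : ∀ a b, b < a → f a b = 0) {a b : ℕ} (hba : b ≤ a) :
    upperTail N N f a b = min (upperTail N N f a 0) (upperTail N N f 0 b) := by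
  rw [upperTail_eq_upperTail_zero_of_le htri hba, min_eq_left]
  exact (upperTail_zero_right_le_zero_left hf htri a).trans (upperTail_anti hf le_rfl hba)

theorem sum_sum_mul_eq_by_parts (c σ : ℕ → ℕ → ℝ)
    (hrow : ∀ a < N, ∑ b ∈ range M, σ a b = 0) (hcol : ∀ b < M, ∑ a ∈ range N, σ a b = 0) :
    ∑ a ∈ range N, ∑ b ∈ range M, c a b * σ a b =
      ∑ i ∈ range N, ∑ j ∈ range M,
        (c (i + 1) (j + 1) - c i (j + 1) - c (i + 1) j + c i j) *
          upperTail N M σ (i + 1) (j + 1) := by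
  have hcol' : ∀ j, ∑ a ∈ range N, ∑ b ∈ Ico (j + 1) M, σ a b = 0 := fun j => by
    rw [sum_comm]
    exact sum_eq_zero fun b hb => hcol b (mem_Ico.1 hb).2
  calc ∑ a ∈ range N, ∑ b ∈ range M, c a b * σ a b
      = ∑ a ∈ range N, ∑ j ∈ range M,
          (c a (j + 1) - c a j) * ∑ b ∈ Ico (j + 1) M, σ a b := by
        refine sum_congr rfl fun a ha => ?_
        rw [sum_range_mul_eq_by_parts (c a) (σ a), hrow a (mem_range.1 ha), mul_zero, zero_add]
    _ = ∑ j ∈ range M, ∑ a ∈ range N,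
          (c a (j + 1) - c a j) * ∑ b ∈ Ico (j + 1) M, σ a b := sum_comm
    _ = ∑ j ∈ range M, ∑ i ∈ range N,
          (c (i + 1) (j + 1) - c (i + 1) j - (c i (j + 1) - c i j)) *
            ∑ a ∈ Ico (i + 1) N, ∑ b ∈ Ico (j + 1) M, σ a b := by
        refine sum_congr rfl fun j _ => ?_
        rw [sum_range_mul_eq_by_parts (fun a => c a (j + 1) - c a j), hcol' j, mul_zero, zero_add]
    _ = _ := by
        rw [sum_comm]
        refine sum_congr rfl fun i _ => sum_congr rfl fun j _ => ?_
        rw [upperTail]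
        ring

theorem sum_mul_le_sum_mul_of_upperTail (c π ρ : ℕ → ℕ → ℝ)
    (hrow : ∀ a, upperTail N M π a 0 = upperTail N M ρ a 0)
    (hcol : ∀ b, upperTail N M π 0 b = upperTail N M ρ 0 b)
    (hcell : ∀ i j, i + 1 < N → j + 1 < M →
      0 ≤ (c (i + 1) (j + 1) - c i (j + 1) - c (i + 1) j + c i j) *
        (upperTail N M π (i + 1) (j + 1) - upperTail N M ρ (i + 1) (j + 1))) :
    ∑ a ∈ range N, ∑ b ∈ range M, c a b * ρ a b ≤ ∑ a ∈ range N, ∑ b ∈ range M, c a b * π a b := by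
  rw [← sub_nonneg, ← sum_sub_distrib]
  simp_rw [← sum_sub_distrib, ← mul_sub]
  rw [sum_sum_mul_eq_by_parts c (fun a b => π a b - ρ a b)
    (fun a ha => (sum_row_eq_upperTail_sub (fun a b => π a b - ρ a b) ha).trans
      (by simp only [upperTail_sub, hrow, sub_self]))
    (fun b hb => (sum_col_eq_upperTail_sub (fun a b => π a b - ρ a b) hb).trans
      (by simp only [upperTail_sub, hcol, sub_self]))]
  refine sum_nonneg fun i hi => sum_nonneg fun j hj => ?_
  rw [upperTail_sub]
  by_cases hiN : i + 1 < N
  · by_cases hjM : j + 1 < M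
    · exact hcell i j hiN hjM
    · simp [upperTail, Ico_eq_empty_of_le (not_lt.1 hjM)]
  · simp [upperTail, Ico_eq_empty_of_le (not_lt.1 hiN)]

section Mixture

variable {ι : Type*} (s : Finset ι) (w : ι → ℝ) (A B : ι → ℕ)

def pointMixture (a b : ℕ) : ℝ :=
  ∑ i ∈ s, if A i = a ∧ B i = b then w i else 0

variable {s A B}

lemma sum_mul_pointMixture (c : ℕ → ℕ → ℝ) (hA : ∀ i ∈ s, A i < N) (hB : ∀ i ∈ s, B i < M) :
    ∑ a ∈ range N, ∑ b ∈ range M, c a b * pointMixture s w A B a b =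
      ∑ i ∈ s, w i * c (A i) (B i) := by
  simp only [pointMixture, mul_sum, mul_ite, mul_zero, ite_and]
  rw [sum_comm_cycle]
  refine sum_congr rfl fun i hi => ?_
  simp [sum_ite_eq, hA i hi, hB i hi, mul_comm]

lemma upperTail_pointMixture (hA : ∀ i ∈ s, A i < N) (hB : ∀ i ∈ s, B i < M) (a b : ℕ) :
    upperTail N M (pointMixture s w A B) a b =
      ∑ i ∈ s, if a ≤ A i ∧ b ≤ B i then w i else 0 := by
  simp only [upperTail, pointMixture, ite_and]
  rw [sum_comm_cycle]
  refine sum_congr rfl fun i hi => ?_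
  simp [sum_ite_eq, hA i hi, hB i hi]

/-- In the cells of the second alternative of `hcell` the cost need not be Monge, but there `π`
already attains the Fréchet bound `min`, just as the comonotone coupling does. -/
theorem sum_weight_mul_le_of_comonotone (c π : ℕ → ℕ → ℝ) (hA : ∀ i ∈ s, A i < N)
    (hB : ∀ i ∈ s, B i < M) (hπ : ∀ a b, 0 ≤ π a b)
    (hjoint : ∀ a b, ∑ i ∈ s, (if a ≤ A i ∧ b ≤ B i then w i else 0) =
      min (upperTail N M π a 0) (upperTail N M π 0 b))
    (hcell : ∀ i j, i + 1 < N → j + 1 < M →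
      c (i + 1) (j + 1) - c i (j + 1) - c (i + 1) j + c i j ≤ 0 ∨
        upperTail N M π (i + 1) (j + 1) =
          min (upperTail N M π (i + 1) 0) (upperTail N M π 0 (j + 1))) :
    ∑ i ∈ s, w i * c (A i) (B i) ≤ ∑ a ∈ range N, ∑ b ∈ range M, c a b * π a b := by
  have htail : ∀ a b, upperTail N M (pointMixture s w A B) a b =
      min (upperTail N M π a 0) (upperTail N M π 0 b) := fun a b => by
    rw [upperTail_pointMixture w hA hB, hjoint]
  rw [← sum_mul_pointMixture w c hA hB]
  refine sum_mul_le_sum_mul_of_upperTail c π _ (fun a => ?_) (fun b => ?_) fun i j hi hj => ?_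
  · rw [htail, min_eq_left (upperTail_anti hπ (Nat.zero_le a) le_rfl)]
  · rw [htail, min_eq_right (upperTail_anti hπ le_rfl (Nat.zero_le b))]
  · rw [htail]
    rcases hcell i j hi hj with hmonge | hfrechet
    · exact mul_nonneg_of_nonpos_of_nonpos hmonge (sub_nonpos.2 (upperTail_le_min hπ _ _))
    · rw [hfrechet, sub_self, mul_zero]

end Mixture

end UpperTail

section ExtendZero

variable {N M : ℕ}

def extendZero (f : Fin N → Fin M → ℝ) (a b : ℕ) : ℝ :=
  if h : a < N ∧ b < M then f ⟨a, h.1⟩ ⟨b, h.2⟩ else 0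

lemma extendZero_of_lt (f : Fin N → Fin M → ℝ) {a b : ℕ} (ha : a < N) (hb : b < M) :
    extendZero f a b = f ⟨a, ha⟩ ⟨b, hb⟩ :=
  dif_pos ⟨ha, hb⟩

@[simp]
lemma extendZero_val (f : Fin N → Fin M → ℝ) (p : Fin N) (q : Fin M) :
    extendZero f p q = f p q :=
  extendZero_of_lt f p.isLt q.isLt

lemma extendZero_mixedDiff (c : Fin N → Fin M → ℝ) {i j : ℕ} (hi : i + 1 < N) (hj : j + 1 < M) :
    extendZero c (i + 1) (j + 1) - extendZero c i (j + 1) - extendZero c (i + 1) j +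
        extendZero c i j =
      c ⟨i + 1, hi⟩ ⟨j + 1, hj⟩ - c ⟨i, by omega⟩ ⟨j + 1, hj⟩ - c ⟨i + 1, hi⟩ ⟨j, by omega⟩ +
        c ⟨i, by omega⟩ ⟨j, by omega⟩ := by
  rw [extendZero_of_lt c hi hj, extendZero_of_lt c (by omega) hj, extendZero_of_lt c hi (by omega),
    extendZero_of_lt c (by omega) (by omega)]

lemma extendZero_nonneg {f : Fin N → Fin M → ℝ} (hf : ∀ p q, 0 ≤ f p q) (a b : ℕ) :
    0 ≤ extendZero f a b := by
  unfold extendZero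
  split_ifs
  exacts [hf _ _, le_rfl]

lemma sum_range_extendZero_row (f : Fin N → Fin M → ℝ) (p : Fin N) :
    ∑ b ∈ range M, extendZero f p b = ∑ q, f p q := by
  rw [← Fin.sum_univ_eq_sum_range]
  simp

lemma sum_range_extendZero_col (f : Fin N → Fin M → ℝ) (q : Fin M) :
    ∑ a ∈ range N, extendZero f a q = ∑ p, f p q := by
  rw [← Fin.sum_univ_eq_sum_range]
  simp

lemma sum_range_extendZero_mul (c f : Fin N → Fin M → ℝ) :
    ∑ a ∈ range N, ∑ b ∈ range M, extendZero c a b * extendZero f a b =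
      ∑ p, ∑ q, c p q * f p q := by
  rw [← Fin.sum_univ_eq_sum_range]
  refine sum_congr rfl fun p _ => ?_
  rw [← Fin.sum_univ_eq_sum_range]
  simp

lemma upperTail_extendZero_zero_zero (f : Fin N → Fin M → ℝ) :
    upperTail N M (extendZero f) 0 0 = ∑ p, ∑ q, f p q := by
  rw [upperTail_zero_right, ← range_eq_Ico, ← Fin.sum_univ_eq_sum_range]
  simp only [sum_range_extendZero_row]

lemma upperTail_extendZero_zero_right_eq_zero_left {L : ℕ} {f : Fin N → Fin M → ℝ}
    {g : Fin L → Fin N → ℝ} (h : ∀ p, ∑ q, f p q = ∑ r, g r p) (a : ℕ) :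
    upperTail N M (extendZero f) a 0 = upperTail L N (extendZero g) 0 a := by
  rw [upperTail_zero_right, upperTail_zero_left]
  refine sum_congr rfl fun p hp => ?_
  have hpN := (mem_Ico.1 hp).2
  exact (sum_range_extendZero_row f ⟨p, hpN⟩).trans
    ((h _).trans (sum_range_extendZero_col g ⟨p, hpN⟩).symm)

lemma upperTail_extendZero_zero_left_eq_zero_left {L : ℕ} {f : Fin N → Fin M → ℝ}
    {g : Fin L → Fin M → ℝ} (h : ∀ q, ∑ p, f p q = ∑ r, g r q) (b : ℕ) :
    upperTail N M (extendZero f) 0 b = upperTail L M (extendZero g) 0 b := by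
  rw [upperTail_zero_left, upperTail_zero_left]
  refine sum_congr rfl fun q hq => ?_
  have hqM := (mem_Ico.1 hq).2
  exact (sum_range_extendZero_col f ⟨q, hqM⟩).trans
    ((h _).trans (sum_range_extendZero_col g ⟨q, hqM⟩).symm)

end ExtendZero

section LayerCake

variable {ι : Type*}

noncomputable def levelMass (s : Finset ι) (u w : ι → ℝ) (v : ℝ) : ℝ :=
  ∑ i ∈ s, if u i ≤ v then w i else 0

lemma levelMass_min {s : Finset ι} {u w : ι → ℝ} {v v' : ℝ} (hv : levelMass s u w v = v)
    (hv' : levelMass s u w v' = v') : levelMass s u w (min v v') = min v v' := by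
  rcases le_total v v' with h | h
  · rwa [min_eq_left h]
  · rwa [min_eq_right h]

theorem exists_levelMass_eq (V : Finset ℝ) (h0 : 0 ∈ V) (hV : ∀ v ∈ V, 0 ≤ v) :
    ∃ (K : ℕ) (u w : ℕ → ℝ), (∀ i < K, u i ∈ V ∧ 0 < u i ∧ 0 < w i) ∧
      ∀ v ∈ V, levelMass (range K) u w v = v := by
  set e := V.orderEmbOfFin rfl
  have hcard : 0 < V.card := card_pos.2 ⟨0, h0⟩
  set E : ℕ → ℝ := fun i => if h : i < V.card then e ⟨i, h⟩ else 0
  have hE : ∀ i (h : i < V.card), E i = e ⟨i, h⟩ := fun i h => dif_pos h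
  have hE_le : ∀ i j, i < V.card → j < V.card → (E i ≤ E j ↔ i ≤ j) := fun i j hi hj => by
    rw [hE i hi, hE j hj, e.le_iff_le, Fin.mk_le_mk]
  have hE0 : E 0 = 0 := by
    rw [hE 0 hcard, orderEmbOfFin_zero rfl hcard]
    exact le_antisymm (min'_le V 0 h0) (hV _ (min'_mem V _))
  refine ⟨V.card - 1, fun i => E (i + 1), fun i => E (i + 1) - E i, fun i hi => ?_, fun v hv => ?_⟩
  · have hlt : E i < E (i + 1) := lt_of_not_ge fun h =>
      absurd ((hE_le (i + 1) i (by omega) (by omega)).1 h) (by omega)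
    refine ⟨?_, ?_, sub_pos.2 hlt⟩
    · show E (i + 1) ∈ V
      rw [hE (i + 1) (by omega)]
      exact orderEmbOfFin_mem V rfl _
    · rw [← hE0]
      exact lt_of_le_of_lt ((hE_le 0 i (by omega) (by omega)).2 (Nat.zero_le i)) hlt
  · obtain ⟨⟨j, hj⟩, rfl⟩ : v ∈ Set.range e := by rwa [range_orderEmbOfFin]
    have hfilter : (range (V.card - 1)).filter (fun i => E (i + 1) ≤ e ⟨j, hj⟩) = range j := by
      ext i
      rw [mem_filter, mem_range, mem_range, ← hE j hj]
      constructor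
      · rintro ⟨hi, hle⟩
        have := (hE_le (i + 1) j (by omega) hj).1 hle
        omega
      · intro hi
        exact ⟨by omega, (hE_le (i + 1) j (by omega) hj).2 hi⟩
    rw [levelMass, ← sum_filter, hfilter, sum_range_sub, hE0, sub_zero, hE j hj]

end LayerCake

section HeightFlow

variable {T k : ℕ}

def prevTime (t : Fin (T + 1)) : Fin (T + 1) :=
  ⟨t.val - 1, by omega⟩

@[simp]
lemma prevTime_zero : prevTime (0 : Fin (T + 1)) = 0 :=
  rfl

@[simp]
lemma prevTime_succ (t : Fin T) : prevTime t.succ = t.castSucc :=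
  Fin.ext (by simp [prevTime])

/-- `X t a b` is the mass moving from height `a` at time `t - 1` to height `b ≥ a` at time `t`
(with `prevTime 0 = 0`: at time `0` all the mass stays at height `0`). -/
structure IsHeightFlow [NeZero k] (X : Fin (T + 1) → Fin k → Fin k → ℝ) : Prop where
  nonneg : ∀ t a b, 0 ≤ X t a b
  eq_zero_of_not_le : ∀ t a b, ¬ a ≤ b → X t a b = 0
  init_zero : X 0 0 0 = 1
  init_eq_zero : ∀ a b, 0 < b → X 0 a b = 0
  conserve : ∀ (t : Fin T) (h : Fin k),
    ∑ a ∈ Iic h, X t.castSucc a h = ∑ b ∈ Ici h, X t.succ h b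

/-- Mass at heights `≥ a` at time `t`. -/
noncomputable def survival (X : Fin (T + 1) → Fin k → Fin k → ℝ) (t : Fin (T + 1)) (a : ℕ) : ℝ :=
  upperTail k k (extendZero (X t)) 0 a

lemma survival_eq_zero_of_le (X : Fin (T + 1) → Fin k → Fin k → ℝ) (t : Fin (T + 1)) {a : ℕ}
    (ha : k ≤ a) : survival X t a = 0 := by
  simp [survival, upperTail, Ico_eq_empty_of_le ha]

namespace IsHeightFlow

variable [NeZero k] {X : Fin (T + 1) → Fin k → Fin k → ℝ} (hX : IsHeightFlow X)
include hX

lemma sum_Iic (t : Fin (T + 1)) (b : Fin k) : ∑ a ∈ Iic b, X t a b = ∑ a, X t a b :=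
  sum_subset (subset_univ _) fun a _ ha => hX.eq_zero_of_not_le t a b (by simpa using ha)

lemma sum_Ici (t : Fin (T + 1)) (a : Fin k) : ∑ b ∈ Ici a, X t a b = ∑ b, X t a b :=
  sum_subset (subset_univ _) fun b _ hb => hX.eq_zero_of_not_le t a b (by simpa using hb)

lemma init_eq (a b : Fin k) : X 0 a b = if a = 0 ∧ b = 0 then 1 else 0 := by
  split_ifs with h
  · rw [h.1, h.2, hX.init_zero]
  · by_cases hb : b = 0
    · subst hb
      exact hX.eq_zero_of_not_le 0 a 0 fun ha => h ⟨le_antisymm ha (Fin.zero_le a), rfl⟩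
    · exact hX.init_eq_zero a b ((Fin.pos_iff_ne_zero' b).2 hb)

lemma sum_row_eq_sum_col_prevTime (t : Fin (T + 1)) (a : Fin k) :
    ∑ b, X t a b = ∑ a', X (prevTime t) a' a := by
  cases t using Fin.cases with
  | zero => by_cases ha : a = 0 <;> simp [hX.init_eq, ha]
  | succ t => rw [← hX.sum_Ici, ← hX.conserve, prevTime_succ, hX.sum_Iic]

lemma extendZero_eq_zero_of_lt (t : Fin (T + 1)) (a b : ℕ) (hba : b < a) :
    extendZero (X t) a b = 0 := by
  unfold extendZero
  split_ifs with h
  · exact hX.eq_zero_of_not_le t _ _ (by simpa [Fin.le_def] using hba)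
  · rfl

lemma upperTail_extendZero_zero_right (t : Fin (T + 1)) (a : ℕ) :
    upperTail k k (extendZero (X t)) a 0 = survival X (prevTime t) a :=
  upperTail_extendZero_zero_right_eq_zero_left (hX.sum_row_eq_sum_col_prevTime t) a

lemma survival_antitone (t : Fin (T + 1)) : Antitone (survival X t) := fun _ _ hab =>
  upperTail_anti (extendZero_nonneg (hX.nonneg t)) le_rfl hab

lemma survival_prevTime_le (t : Fin (T + 1)) (a : ℕ) :
    survival X (prevTime t) a ≤ survival X t a := by
  rw [← hX.upperTail_extendZero_zero_right]
  exact upperTail_zero_right_le_zero_left (extendZero_nonneg (hX.nonneg t))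
    (hX.extendZero_eq_zero_of_lt t) a

lemma survival_monotone (a : ℕ) : Monotone fun t => survival X t a :=
  Fin.monotone_iff_le_succ.2 fun t => by simpa using hX.survival_prevTime_le t.succ a

lemma survival_time_zero {a : ℕ} (ha : a ≠ 0) : survival X 0 a = 0 := by
  unfold survival upperTail
  refine sum_eq_zero fun p _ => sum_eq_zero fun q hq => ?_
  unfold extendZero
  split_ifs with h
  · exact hX.init_eq_zero _ _ (by simp only [mem_Ico] at hq; simp [Fin.lt_def]; omega)
  · rfl

lemma survival_height_zero (t : Fin (T + 1)) : survival X t 0 = 1 := by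
  induction t using Fin.induction with
  | zero => simp [survival, upperTail_extendZero_zero_zero, hX.init_eq, ite_and]
  | succ t ih => rw [← ih, survival, hX.upperTail_extendZero_zero_right, prevTime_succ]

lemma survival_nonneg (t : Fin (T + 1)) (a : ℕ) : 0 ≤ survival X t a := by
  unfold survival upperTail
  exact sum_nonneg fun _ _ => sum_nonneg fun _ _ => extendZero_nonneg (hX.nonneg t) _ _

lemma survival_le_one (t : Fin (T + 1)) (a : ℕ) : survival X t a ≤ 1 :=
  hX.survival_height_zero t ▸ hX.survival_antitone t (Nat.zero_le a)

end IsHeightFlow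

end HeightFlow

section Quantile

variable {T k : ℕ} [NeZero k]

noncomputable def quantile (X : Fin (T + 1) → Fin k → Fin k → ℝ) (u : ℝ) (t : Fin (T + 1)) :
    Fin k :=
  ⟨Nat.findGreatest (fun a => u ≤ survival X t a) (k - 1),
    (Nat.findGreatest_le _).trans_lt (Nat.sub_lt (NeZero.pos k) one_pos)⟩

def IsHeightPath (A : Fin (T + 1) → Fin k) : Prop :=
  Monotone A ∧ A 0 = 0

lemma isHeightPath_zero : IsHeightPath (0 : Fin (T + 1) → Fin k) :=
  ⟨monotone_const, rfl⟩

namespace IsHeightFlow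

variable {X : Fin (T + 1) → Fin k → Fin k → ℝ} (hX : IsHeightFlow X) {u : ℝ}
include hX

lemma le_quantile_iff (hu : u ∈ Set.Ioc 0 1) (t : Fin (T + 1)) (a : ℕ) :
    a ≤ (quantile X u t : ℕ) ↔ u ≤ survival X t a := by
  have h0 : u ≤ survival X t 0 := (hX.survival_height_zero t).symm ▸ hu.2
  constructor
  · intro h
    have hspec : u ≤ survival X t (quantile X u t) :=
      Nat.findGreatest_spec (P := fun a => u ≤ survival X t a) (Nat.zero_le _) h0
    exact hspec.trans (hX.survival_antitone t h)
  · intro h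
    have hak : a < k := by
      by_contra hak
      rw [survival_eq_zero_of_le X t (not_lt.1 hak)] at h
      exact hu.1.not_ge h
    exact Nat.le_findGreatest (by omega) h

lemma isHeightPath_quantile (hu : u ∈ Set.Ioc 0 1) : IsHeightPath (quantile X u) := by
  refine ⟨fun t t' htt' => ?_, ?_⟩
  · rw [Fin.le_def, hX.le_quantile_iff hu]
    exact ((hX.le_quantile_iff hu t _).1 le_rfl).trans (hX.survival_monotone _ htt')
  · ext
    by_contra h
    have := (hX.le_quantile_iff hu 0 _).1 le_rfl
    rw [hX.survival_time_zero h] at this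
    exact hu.1.not_ge this

end IsHeightFlow

end Quantile

section QuantileCoupling

variable {T : ℕ} {ι : Type*} {s : Finset ι} {u w : ι → ℝ}

lemma levelMass_quantile_eq_min {k l : ℕ} [NeZero k] [NeZero l]
    {X : Fin (T + 1) → Fin k → Fin k → ℝ} {Y : Fin (T + 1) → Fin l → Fin l → ℝ}
    (hX : IsHeightFlow X) (hY : IsHeightFlow Y) (hu : ∀ i ∈ s, u i ∈ Set.Ioc 0 1)
    (hcakeX : ∀ t a, levelMass s u w (survival X t a) = survival X t a)
    (hcakeY : ∀ t b, levelMass s u w (survival Y t b) = survival Y t b)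
    (t t' : Fin (T + 1)) (a b : ℕ) :
    ∑ i ∈ s, (if a ≤ (quantile X (u i) t : ℕ) ∧ b ≤ (quantile Y (u i) t' : ℕ) then w i else 0) =
      min (survival X t a) (survival Y t' b) := by
  rw [← levelMass_min (hcakeX t a) (hcakeY t' b), levelMass]
  refine sum_congr rfl fun i hi => ?_
  simp only [le_min_iff, hX.le_quantile_iff (hu i hi), hY.le_quantile_iff (hu i hi)]

variable {k : ℕ} [NeZero k]

theorem IsHeightFlow.sum_weight_mul_quantile_le {X : Fin (T + 1) → Fin k → Fin k → ℝ}
    (hX : IsHeightFlow X) (c : Fin k → Fin k → ℝ)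
    (hc : ∀ h1 h1' h2 h2' : Fin k, h1 ≤ h1' → h1' ≤ h2 → h2 ≤ h2' →
      c h1 h2 + c h1' h2' ≤ c h1 h2' + c h1' h2)
    (hu : ∀ i ∈ s, u i ∈ Set.Ioc 0 1)
    (hcake : ∀ t a, levelMass s u w (survival X t a) = survival X t a) (t : Fin (T + 1)) :
    ∑ i ∈ s, w i * c (quantile X (u i) (prevTime t)) (quantile X (u i) t) ≤
      ∑ b, ∑ a ∈ Iic b, c a b * X t a b := by
  have hπ := extendZero_nonneg (hX.nonneg t)
  calc ∑ i ∈ s, w i * c (quantile X (u i) (prevTime t)) (quantile X (u i) t)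
      = ∑ i ∈ s, w i * extendZero c (quantile X (u i) (prevTime t)) (quantile X (u i) t) := by
        simp only [extendZero_val]
    _ ≤ ∑ a ∈ range k, ∑ b ∈ range k, extendZero c a b * extendZero (X t) a b := by
        refine sum_weight_mul_le_of_comonotone w _ _ (fun i _ => Fin.isLt _)
          (fun i _ => Fin.isLt _) hπ (fun a b => ?_) fun i j hi hj => ?_
        · rw [hX.upperTail_extendZero_zero_right]
          exact levelMass_quantile_eq_min hX hX hu hcake hcake _ _ a b
        · rcases lt_or_ge i j with hij | hji
          · left
            rw [extendZero_mixedDiff c hi hj]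
            linarith [hc ⟨i, by omega⟩ ⟨i + 1, hi⟩ ⟨j, by omega⟩ ⟨j + 1, hj⟩
              (Fin.mk_le_mk.2 (by omega)) (Fin.mk_le_mk.2 hij) (Fin.mk_le_mk.2 (by omega))]
          · exact Or.inr (upperTail_eq_min_of_le hπ (hX.extendZero_eq_zero_of_lt t) (by omega))
    _ = ∑ b, ∑ a ∈ Iic b, c a b * X t a b := by
        rw [sum_range_extendZero_mul, sum_comm]
        refine sum_congr rfl fun b _ => (sum_subset (subset_univ _) fun a _ ha => ?_).symm
        rw [hX.eq_zero_of_not_le t a b (by simpa using ha), mul_zero]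

theorem IsHeightFlow.sum_weight_mul_quantile_le_of_marginals {l : ℕ} [NeZero l]
    {X : Fin (T + 1) → Fin k → Fin k → ℝ} {Y : Fin (T + 1) → Fin l → Fin l → ℝ}
    (hX : IsHeightFlow X) (hY : IsHeightFlow Y) (t : Fin (T + 1)) (Z : Fin k → Fin l → ℝ)
    (hZ : ∀ h g, 0 ≤ Z h g) (hrow : ∀ h, ∑ g, Z h g = ∑ a, X t a h)
    (hcol : ∀ g, ∑ h, Z h g = ∑ b, Y t b g) (c : Fin k → Fin l → ℝ)
    (hc : ∀ (h h' : Fin k) (g g' : Fin l), h ≤ h' → g ≤ g' → c h g + c h' g' ≤ c h' g + c h g')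
    (hu : ∀ i ∈ s, u i ∈ Set.Ioc 0 1)
    (hcakeX : ∀ t a, levelMass s u w (survival X t a) = survival X t a)
    (hcakeY : ∀ t b, levelMass s u w (survival Y t b) = survival Y t b) :
    ∑ i ∈ s, w i * c (quantile X (u i) t) (quantile Y (u i) t) ≤ ∑ h, ∑ g, c h g * Z h g := by
  calc ∑ i ∈ s, w i * c (quantile X (u i) t) (quantile Y (u i) t)
      = ∑ i ∈ s, w i * extendZero c (quantile X (u i) t) (quantile Y (u i) t) := by
        simp only [extendZero_val]
    _ ≤ ∑ a ∈ range k, ∑ b ∈ range l, extendZero c a b * extendZero Z a b := by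
        refine sum_weight_mul_le_of_comonotone w _ _ (fun i _ => Fin.isLt _)
          (fun i _ => Fin.isLt _) (extendZero_nonneg hZ) (fun a b => ?_) fun i j hi hj => ?_
        · rw [upperTail_extendZero_zero_right_eq_zero_left hrow,
            upperTail_extendZero_zero_left_eq_zero_left hcol]
          exact levelMass_quantile_eq_min hX hY hu hcakeX hcakeY t t a b
        · left
          rw [extendZero_mixedDiff c hi hj]
          linarith [hc ⟨i, by omega⟩ ⟨i + 1, hi⟩ ⟨j, by omega⟩ ⟨j + 1, hj⟩
            (Fin.mk_le_mk.2 (by omega)) (Fin.mk_le_mk.2 (by omega))]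
    _ = ∑ h, ∑ g, c h g * Z h g := sum_range_extendZero_mul c Z

end QuantileCoupling

section PathPoint

variable {T n m k : ℕ} {D : Type}

lemma prevTime_le (t : Fin (T + 1)) : prevTime t ≤ t :=
  Fin.le_def.2 (Nat.sub_le _ _)

def pathFlow (A : Fin (T + 1) → Fin k) (t : Fin (T + 1)) (a b : Fin k) : ℝ :=
  if a = A (prevTime t) ∧ b = A t then 1 else 0

def pathPoint (A : Fin (T + 1) → D → Fin n) (G : Fin (T + 1) → Fin m) : DikePoint T n m D where
  CY t d := pathFlow (fun s => A s d) t
  B := pathFlow G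
  DY t d h g := if h = A t d ∧ g = G t then 1 else 0

lemma pathPoint_isIntegral (A : Fin (T + 1) → D → Fin n) (G : Fin (T + 1) → Fin m) :
    isIntegral (pathPoint A G) := by
  refine ⟨fun t d a b => ?_, fun t a b => ?_, fun t d h g => ?_⟩ <;>
    simp only [pathPoint, pathFlow] <;> split_ifs <;> simp

lemma pathFlow_mem_Icc (A : Fin (T + 1) → Fin k) (t : Fin (T + 1)) (a b : Fin k) :
    pathFlow A t a b ∈ Set.Icc (0 : ℝ) 1 := by
  unfold pathFlow
  split_ifs <;> norm_num

variable {A : Fin (T + 1) → Fin k}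

lemma sum_Iic_pathFlow (hA : Monotone A) (t : Fin (T + 1)) (b : Fin k) :
    ∑ a ∈ Iic b, pathFlow A t a b = if b = A t then 1 else 0 := by
  split_ifs with hb
  · rw [sum_eq_single_of_mem (A (prevTime t)) (mem_Iic.2 (hb ▸ hA (prevTime_le t)))
      fun a _ ha => by simp [pathFlow, ha]]
    simp [pathFlow, hb]
  · exact sum_eq_zero fun a _ => by simp [pathFlow, hb]

lemma sum_Ici_pathFlow (hA : Monotone A) (t : Fin (T + 1)) (a : Fin k) :
    ∑ b ∈ Ici a, pathFlow A t a b = if a = A (prevTime t) then 1 else 0 := by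
  split_ifs with ha
  · rw [sum_eq_single_of_mem (A t) (mem_Ici.2 (ha ▸ hA (prevTime_le t)))
      fun b _ hb => by simp [pathFlow, hb]]
    simp [pathFlow, ha]
  · exact sum_eq_zero fun b _ => by simp [pathFlow, ha]

lemma sum_mul_pathFlow (hA : Monotone A) (c : Fin k → Fin k → ℝ) (t : Fin (T + 1)) :
    ∑ b, ∑ a ∈ Iic b, c a b * pathFlow A t a b = c (A (prevTime t)) (A t) := by
  rw [sum_eq_single (A t) fun b _ hb => sum_eq_zero fun a _ => by simp [pathFlow, hb],
    sum_eq_single_of_mem (A (prevTime t)) (mem_Iic.2 (hA (prevTime_le t)))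
      fun a _ ha => by simp [pathFlow, ha]]
  · simp [pathFlow]
  · simp

lemma IsHeightPath.isHeightFlow [NeZero k] (hA : IsHeightPath A) : IsHeightFlow (pathFlow A) where
  nonneg t a b := (pathFlow_mem_Icc A t a b).1
  eq_zero_of_not_le t a b hab := by
    rw [pathFlow, if_neg]
    rintro ⟨rfl, rfl⟩
    exact hab (hA.1 (prevTime_le t))
  init_zero := by simp [pathFlow, hA.2]
  init_eq_zero a b hb := by
    rw [pathFlow, if_neg]
    rintro ⟨-, rfl⟩
    exact hb.ne' hA.2
  conserve t h := by rw [sum_Iic_pathFlow hA.1, sum_Ici_pathFlow hA.1, prevTime_succ]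

lemma obj_pathPoint [Fintype D] {A : Fin (T + 1) → D → Fin n} {G : Fin (T + 1) → Fin m}
    (Dcost : Fin (T + 1) → D → Fin n → Fin n → ℝ)
    (Dexp : Fin (T + 1) → D → Fin n → Fin m → ℝ) (Bcost : Fin (T + 1) → Fin m → Fin m → ℝ)
    (Bexp : Fin (T + 1) → Fin m → ℝ) (hA : ∀ d, Monotone fun t => A t d) (hG : Monotone G) :
    obj Dcost Dexp Bcost Bexp (pathPoint A G) =
      ∑ t, ∑ d, Dcost t d (A (prevTime t) d) (A t d) + ∑ t, ∑ d, Dexp t d (A t d) (G t) +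
        ∑ t, (Bcost t (G (prevTime t)) (G t) + Bexp t (G t)) := by
  simp only [obj, pathPoint, sum_mul_pathFlow (hA _), sum_mul_pathFlow hG]
  simp [mul_ite, ite_and]

end PathPoint

section Polytope

variable {T n m : ℕ} {D : Type} [Fintype D] [NeZero n] [NeZero m]

lemma IsHeightFlow.of_memQ_CY {y : DikePoint T n m D} (hy : memQ y) (d : D) :
    IsHeightFlow fun t => y.CY t d := by
  obtain ⟨hbox, -, -, htri, -, hinit, hinit', -, -, hcons, -, -, -⟩ := hy
  exact ⟨fun t a b => (hbox t d a b).1, fun t => htri t d, hinit d, hinit' d, fun t => hcons t d⟩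

lemma IsHeightFlow.of_memQ_B {y : DikePoint T n m D} (hy : memQ y) : IsHeightFlow y.B := by
  obtain ⟨-, hbox, -, -, htri, -, -, hinit, hinit', -, -, hcons, -⟩ := hy
  exact ⟨fun t a b => (hbox t a b).1, htri, hinit, hinit', hcons⟩

variable {A : Fin (T + 1) → D → Fin n} {G : Fin (T + 1) → Fin m}

lemma pathPoint_memQ (hA : ∀ d, IsHeightPath fun t => A t d) (hG : IsHeightPath G) :
    memQ (pathPoint A G) := by
  have hX := fun d => (hA d).isHeightFlow
  have hY := hG.isHeightFlow
  refine ⟨fun t d => pathFlow_mem_Icc (fun s => A s d) t, pathFlow_mem_Icc G, fun t d h g => ?_,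
    fun t d => (hX d).eq_zero_of_not_le t, hY.eq_zero_of_not_le, fun d => (hX d).init_zero,
    fun d => (hX d).init_eq_zero, hY.init_zero, hY.init_eq_zero, fun t d => (hX d).conserve t,
    fun t d h => ?_, hY.conserve, fun t d g => ?_⟩
  · simp only [pathPoint]
    split_ifs <;> norm_num
  · simp only [pathPoint]
    rw [sum_Iic_pathFlow (hA d).1]
    by_cases hh : h = A t d <;> simp [hh]
  · simp only [pathPoint]
    rw [sum_Iic_pathFlow hG.1]
    by_cases hg : g = G t <;> simp [hg]

end Polytope

section Rounding

variable {T n m : ℕ} {D : Type} [Fintype D] [NeZero n] [NeZero m]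
  {Dcost : Fin (T + 1) → D → Fin n → Fin n → ℝ} {Dexp : Fin (T + 1) → D → Fin n → Fin m → ℝ}
  {Bcost : Fin (T + 1) → Fin m → Fin m → ℝ} {Bexp : Fin (T + 1) → Fin m → ℝ}

noncomputable def quantilePoint (y : DikePoint T n m D) (u : ℝ) : DikePoint T n m D :=
  pathPoint (fun t d => quantile (fun t => y.CY t d) u t) (quantile y.B u)

theorem sum_weight_mul_obj_quantilePoint_le (hi : condI Dexp) (hii : condII Bcost)
    (hiii : condIII Dcost) {y : DikePoint T n m D} (hy : memQ y) {ι : Type*} {s : Finset ι}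
    {u w : ι → ℝ} (hu : ∀ i ∈ s, u i ∈ Set.Ioc 0 1)
    (hcakeCY : ∀ d t a, levelMass s u w (survival (fun t => y.CY t d) t a) =
      survival (fun t => y.CY t d) t a)
    (hcakeB : ∀ t a, levelMass s u w (survival y.B t a) = survival y.B t a) :
    ∑ i ∈ s, w i * obj Dcost Dexp Bcost Bexp (quantilePoint y (u i)) ≤
      obj Dcost Dexp Bcost Bexp y := by
  have hX := IsHeightFlow.of_memQ_CY hy
  have hY := IsHeightFlow.of_memQ_B hy
  obtain ⟨-, -, hDY, -, -, -, -, -, -, -, hlinkCY, -, hlinkB⟩ := hy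
  rw [sum_congr rfl fun i hi => by
    rw [quantilePoint, obj_pathPoint _ _ _ _ (fun d => ((hX d).isHeightPath_quantile (hu i hi)).1)
      (hY.isHeightPath_quantile (hu i hi)).1]]
  simp only [obj, mul_add, add_mul, sum_add_distrib, mul_sum]
  refine add_le_add (add_le_add ?_ ?_) (add_le_add ?_ ?_) <;> rw [sum_comm] <;>
    refine sum_le_sum fun t _ => ?_
  · rw [sum_comm]
    exact sum_le_sum fun d _ =>
      (hX d).sum_weight_mul_quantile_le (Dcost t d) (hiii t d) hu (hcakeCY d) t
  · rw [sum_comm]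
    refine sum_le_sum fun d _ => (hX d).sum_weight_mul_quantile_le_of_marginals hY t (y.DY t d)
      (fun h g => (hDY t d h g).1) (fun h => ?_) (fun g => ?_) (Dexp t d) (hi t d) hu
      (hcakeCY d) hcakeB
    · rw [← hlinkCY, (hX d).sum_Iic]
    · rw [← hlinkB t d, hY.sum_Iic]
  · exact hY.sum_weight_mul_quantile_le (Bcost t) (hii t) hu hcakeB t
  · exact hY.sum_weight_mul_quantile_le (fun _ g => Bexp t g)
      (fun _ _ _ _ _ _ _ => le_of_eq (add_comm _ _)) hu hcakeB t

theorem exists_levels_of_memQ {y : DikePoint T n m D} (hy : memQ y) :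
    ∃ (K : ℕ) (u w : ℕ → ℝ), (∀ i ∈ range K, u i ∈ Set.Ioc 0 1 ∧ 0 < w i) ∧
      (∀ d t a, levelMass (range K) u w (survival (fun t => y.CY t d) t a) =
        survival (fun t => y.CY t d) t a) ∧
      ∀ t a, levelMass (range K) u w (survival y.B t a) = survival y.B t a := by
  have hX := IsHeightFlow.of_memQ_CY hy
  have hY := IsHeightFlow.of_memQ_B hy
  set V : Finset ℝ := insert 0
    ((univ.image fun p : Fin (T + 1) × D × Fin n => survival (fun t => y.CY t p.2.1) p.1 p.2.2) ∪
      univ.image fun p : Fin (T + 1) × Fin m => survival y.B p.1 p.2)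
  have hCYV : ∀ d t a, survival (fun t => y.CY t d) t a ∈ V := fun d t a => by
    rcases lt_or_ge a n with ha | ha
    · exact mem_insert_of_mem (mem_union_left _ (mem_image.2 ⟨(t, d, ⟨a, ha⟩), mem_univ _, rfl⟩))
    · rw [survival_eq_zero_of_le _ _ ha]
      exact mem_insert_self _ _
  have hBV : ∀ t a, survival y.B t a ∈ V := fun t a => by
    rcases lt_or_ge a m with ha | ha
    · exact mem_insert_of_mem (mem_union_right _ (mem_image.2 ⟨(t, ⟨a, ha⟩), mem_univ _, rfl⟩))
    · rw [survival_eq_zero_of_le _ _ ha]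
      exact mem_insert_self _ _
  have hV : ∀ v ∈ V, 0 ≤ v ∧ v ≤ 1 := by
    simp only [V, mem_insert, mem_union, mem_image, mem_univ, true_and]
    rintro v (rfl | ⟨⟨t, d, a⟩, rfl⟩ | ⟨⟨t, a⟩, rfl⟩)
    · norm_num
    · exact ⟨(hX d).survival_nonneg t a, (hX d).survival_le_one t a⟩
    · exact ⟨hY.survival_nonneg t a, hY.survival_le_one t a⟩
  obtain ⟨K, u, w, hK, hcake⟩ :=
    exists_levelMass_eq V (mem_insert_self _ _) fun v hv => (hV v hv).1
  refine ⟨K, u, w, fun i hi => ?_, fun d t a => hcake _ (hCYV d t a), fun t a => hcake _ (hBV t a)⟩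
  obtain ⟨huV, hu0, hw0⟩ := hK i (mem_range.1 hi)
  exact ⟨⟨hu0, (hV _ huV).2⟩, hw0⟩

theorem exists_pathPoint_obj_le (hi : condI Dexp) (hii : condII Bcost) (hiii : condIII Dcost)
    {y : DikePoint T n m D} (hy : memQ y) :
    ∃ (A : Fin (T + 1) → D → Fin n) (G : Fin (T + 1) → Fin m),
      (∀ d, IsHeightPath fun t => A t d) ∧ IsHeightPath G ∧
        obj Dcost Dexp Bcost Bexp (pathPoint A G) ≤ obj Dcost Dexp Bcost Bexp y := by
  have hY := IsHeightFlow.of_memQ_B hy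
  obtain ⟨K, u, w, huw, hcakeCY, hcakeB⟩ := exists_levels_of_memQ hy
  have hu := fun i hi => (huw i hi).1
  have hw : ∑ i ∈ range K, w i = 1 := by
    have h1 := hcakeB 0 0
    rw [hY.survival_height_zero, levelMass, sum_congr rfl fun i hi => if_pos (hu i hi).2] at h1
    exact h1
  obtain ⟨i, hiK, hle⟩ := exists_le_of_sum_le (nonempty_of_sum_ne_zero (hw ▸ one_ne_zero))
    (show ∑ i ∈ range K, w i * obj Dcost Dexp Bcost Bexp (quantilePoint y (u i)) ≤
        ∑ i ∈ range K, w i * obj Dcost Dexp Bcost Bexp y by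
      rw [← sum_mul, hw, one_mul]
      exact sum_weight_mul_obj_quantilePoint_le hi hii hiii hy hu hcakeCY hcakeB)
  exact ⟨_, _, fun d => (IsHeightFlow.of_memQ_CY hy d).isHeightPath_quantile (hu i hiK),
    hY.isHeightPath_quantile (hu i hiK), le_of_mul_le_mul_left hle (huw i hiK).2⟩

end Rounding

theorem statement_3_general (T n m : ℕ) [NeZero n] [NeZero m]
    (D : Type) [Fintype D]
    (Dcost : Fin (T + 1) → D → Fin n → Fin n → ℝ)
    (Dexp : Fin (T + 1) → D → Fin n → Fin m → ℝ)
    (Bcost : Fin (T + 1) → Fin m → Fin m → ℝ)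
    (Bexp : Fin (T + 1) → Fin m → ℝ)
    (hi : condI Dexp) (hii : condII Bcost) (hiii : condIII Dcost) :
    ∃ x : DikePoint T n m D, memQ x ∧ isIntegral x ∧
      ∀ y : DikePoint T n m D, memQ y →
        obj Dcost Dexp Bcost Bexp x ≤ obj Dcost Dexp Bcost Bexp y := by
  obtain ⟨⟨A, G⟩, ⟨hA, hG⟩, hmin⟩ := Set.exists_min_image
    {p : (Fin (T + 1) → D → Fin n) × (Fin (T + 1) → Fin m) |
      (∀ d, IsHeightPath fun t => p.1 t d) ∧ IsHeightPath p.2}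
    (fun p => obj Dcost Dexp Bcost Bexp (pathPoint p.1 p.2)) (Set.toFinite _)
    ⟨(0, 0), fun _ => isHeightPath_zero, isHeightPath_zero⟩
  refine ⟨pathPoint A G, pathPoint_memQ hA hG, pathPoint_isIntegral A G, fun y hy => ?_⟩
  obtain ⟨A', G', hA', hG', hle⟩ := exists_pathPoint_obj_le hi hii hiii hy
  exact (hmin (A', G') ⟨hA', hG'⟩).trans hle

/-- Proposition 1: under conditions (i), (ii), (iii) on the
nonnegative cost data, the LP relaxation has an integral optimal solution. -/
theorem statement_3 (T n m : ℕ) (hT : 1 ≤ T) [NeZero n] [NeZero m]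
    (D : Type) [Fintype D] [Nonempty D]
    (Dcost : Fin (T + 1) → D → Fin n → Fin n → ℝ)
    (Dexp : Fin (T + 1) → D → Fin n → Fin m → ℝ)
    (Bcost : Fin (T + 1) → Fin m → Fin m → ℝ)
    (Bexp : Fin (T + 1) → Fin m → ℝ)
    (hDcost : ∀ t d h1 h2, h1 ≤ h2 → 0 ≤ Dcost t d h1 h2)
    (hDexp : ∀ t d h g, 0 ≤ Dexp t d h g)
    (hBcost : ∀ t g1 g2, g1 ≤ g2 → 0 ≤ Bcost t g1 g2)
    (hBexp : ∀ t g, 0 ≤ Bexp t g)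
    (hi : condI Dexp) (hii : condII Bcost) (hiii : condIII Dcost) :
    ∃ x : DikePoint T n m D, memQ x ∧ isIntegral x ∧
      ∀ y : DikePoint T n m D, memQ y →
        obj Dcost Dexp Bcost Bexp x ≤ obj Dcost Dexp Bcost Bexp y :=
  statement_3_general T n m D Dcost Dexp Bcost Bexp hi hii hiii
end

section
/- (Uncrossing of dike flows.) Let x ∈ Q, let t ∈ {0,…,T}, d ∈ D, and let h1 ≤ h1' ≤ h2 ≤ h2' in H_D. Let ε ≥ 0 satisfy ε ≤ CY(t,d,h1,h2'), ε ≤ CY(t,d,h1',h2), CY(t,d,h1,h2)+ε ≤ 1 and CY(t,d,h1',h2')+ε ≤ 1. Define x' from x by decreasing the coordinates CY(t,d,h1,h2') and CY(t,d,h1',h2) by ε and increasing the coordinates CY(t,d,h1,h2) and CY(t,d,h1',h2') by ε, leaving all other coordinates unchanged. Then x' ∈ Q; moreover, if condition (iii) holds, then obj(x') ≤ obj(x). -/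
open Finset

/-! The perturbation is supported on the crossing pattern `(h1, h2), (h1', h2')` (`+ε`) versus
`(h1, h2'), (h1', h2)` (`-ε`) of a single `(t, d)`-slice. All four pairs are ordered, so in that
slice every sum `∑ h1 ≤ h, CY t d h1 h` and `∑ h3 ≥ h, CY t d h h3` loses exactly the `ε` it gains;
hence all equality constraints survive, and the bounds on `ε` are precisely the box constraints at
the four modified entries. If `ε = 0`, `h1 = h1'` or `h2 = h2'` the perturbation cancels; otherwise
`h2' > 0` and `CY t d h1 h2' ≥ ε > 0` force `t ≠ 0`, so the initial conditions are untouched.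
The objective changes by `ε` times the crossing difference of `D_cost`, which (iii) makes `≤ 0`. -/

theorem add_ite_sub_ite_mem_Icc {ι : Type*} [DecidableEq ι] (f : ι → ℝ)
    (hf : ∀ i, f i ∈ Set.Icc (0 : ℝ) 1) {p p' q q' : ι} (hp : p ≠ p') (hq : q ≠ q')
    {ε : ℝ} (hε : 0 ≤ ε) (hfp : f p + ε ≤ 1) (hfp' : f p' + ε ≤ 1)
    (hfq : ε ≤ f q) (hfq' : ε ≤ f q') (i : ι) :
    f i + (if i = p then ε else 0) + (if i = p' then ε else 0)
      - (if i = q then ε else 0) - (if i = q' then ε else 0) ∈ Set.Icc (0 : ℝ) 1 := by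
  obtain ⟨h0, h1⟩ := hf i
  constructor <;> split_ifs <;> subst_vars <;> first | contradiction | linarith

namespace DikePoint

variable {T : ℕ} {D : Type} [DecidableEq D] {n : ℕ}

theorem sum_Iic_ite_eq (c : ℝ) (s t : Fin (T + 1)) (e d : D) {p q : Fin n} (hpq : p ≤ q)
    (b : Fin n) :
    ∑ a ∈ Iic b, (if (s, e, a, b) = (t, d, p, q) then c else 0)
      = if (s, e, b) = (t, d, q) then c else 0 := by
  by_cases h : (s, e, b) = (t, d, q)
  · simp only [Prod.mk.injEq] at h
    obtain ⟨rfl, rfl, rfl⟩ := h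
    simp [hpq]
  · rw [if_neg h]
    refine sum_eq_zero fun a _ => if_neg ?_
    contrapose! h
    simp_all

theorem sum_Ici_ite_eq (c : ℝ) (s t : Fin (T + 1)) (e d : D) {p q : Fin n} (hpq : p ≤ q)
    (a : Fin n) :
    ∑ b ∈ Ici a, (if (s, e, a, b) = (t, d, p, q) then c else 0)
      = if (s, e, a) = (t, d, p) then c else 0 := by
  by_cases h : (s, e, a) = (t, d, p)
  · simp only [Prod.mk.injEq] at h
    obtain ⟨rfl, rfl, rfl⟩ := h
    simp [hpq]
  · rw [if_neg h]
    refine sum_eq_zero fun b _ => if_neg ?_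
    contrapose! h
    simp_all

theorem sum_sum_sum_Iic_mul_ite [Fintype D] (w : Fin (T + 1) → D → Fin n → Fin n → ℝ) (c : ℝ)
    (t : Fin (T + 1)) (d : D) {p q : Fin n} (hpq : p ≤ q) :
    ∑ s, ∑ e, ∑ b, ∑ a ∈ Iic b, w s e a b * (if (s, e, a, b) = (t, d, p, q) then c else 0)
      = w t d p q * c := by
  have hw : ∀ s e b a, w s e a b * (if (s, e, a, b) = (t, d, p, q) then c else 0)
      = if (s, e, a, b) = (t, d, p, q) then w t d p q * c else 0 := by
    intro s e b a
    split_ifs with h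
    · simp only [Prod.mk.injEq] at h
      obtain ⟨rfl, rfl, rfl, rfl⟩ := h
      rfl
    · exact mul_zero _
  simp_rw [hw, sum_Iic_ite_eq _ _ _ _ _ hpq, Prod.mk.injEq, ite_and]
  simp

variable {m : ℕ}

def uncross (x : DikePoint T n m D) (t : Fin (T + 1)) (d : D) (h1 h1' h2 h2' : Fin n) (ε : ℝ) :
    DikePoint T n m D where
  CY s e a b := x.CY s e a b
    + (if (s, e, a, b) = (t, d, h1, h2) then ε else 0)
    + (if (s, e, a, b) = (t, d, h1', h2') then ε else 0)
    - (if (s, e, a, b) = (t, d, h1, h2') then ε else 0)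
    - (if (s, e, a, b) = (t, d, h1', h2) then ε else 0)
  B := x.B
  DY := x.DY

variable (x : DikePoint T n m D) (t : Fin (T + 1)) (d : D) {h1 h1' h2 h2' : Fin n} {ε : ℝ}

theorem uncross_eq_self (h : ε = 0 ∨ h1 = h1' ∨ h2 = h2') :
    x.uncross t d h1 h1' h2 h2' ε = x := by
  obtain ⟨CY, B, DY⟩ := x
  simp only [uncross, mk.injEq, and_true]
  funext s e a b
  rcases h with rfl | rfl | rfl
  · simp
  · ring
  · ring

theorem uncross_CY_of_ne_or_not_le (hh1 : h1 ≤ h1') (hh2 : h1' ≤ h2) (hh3 : h2 ≤ h2')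
    {s : Fin (T + 1)} (e : D) {a b : Fin n} (h : s ≠ t ∨ ¬ a ≤ b) :
    (x.uncross t d h1 h1' h2 h2' ε).CY s e a b = x.CY s e a b := by
  have hne : ∀ p q : Fin n, p ≤ q → (s, e, a, b) ≠ (t, d, p, q) := by
    rintro p q hpq hs
    simp only [Prod.mk.injEq] at hs
    obtain ⟨rfl, -, rfl, rfl⟩ := hs
    tauto
  simp only [uncross]
  rw [if_neg (hne h1 h2 (hh1.trans hh2)), if_neg (hne h1' h2' (hh2.trans hh3)),
    if_neg (hne h1 h2' (hh1.trans (hh2.trans hh3))), if_neg (hne h1' h2 hh2)]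
  ring

theorem uncross_sum_Iic (hh1 : h1 ≤ h1') (hh2 : h1' ≤ h2) (hh3 : h2 ≤ h2')
    (s : Fin (T + 1)) (e : D) (b : Fin n) :
    ∑ a ∈ Iic b, (x.uncross t d h1 h1' h2 h2' ε).CY s e a b = ∑ a ∈ Iic b, x.CY s e a b := by
  simp only [uncross, sum_add_distrib, sum_sub_distrib, sum_Iic_ite_eq _ _ _ _ _ hh2,
    sum_Iic_ite_eq _ _ _ _ _ (hh1.trans hh2), sum_Iic_ite_eq _ _ _ _ _ (hh2.trans hh3),
    sum_Iic_ite_eq _ _ _ _ _ (hh1.trans (hh2.trans hh3))]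
  ring

theorem uncross_sum_Ici (hh1 : h1 ≤ h1') (hh2 : h1' ≤ h2) (hh3 : h2 ≤ h2')
    (s : Fin (T + 1)) (e : D) (a : Fin n) :
    ∑ b ∈ Ici a, (x.uncross t d h1 h1' h2 h2' ε).CY s e a b = ∑ b ∈ Ici a, x.CY s e a b := by
  simp only [uncross, sum_add_distrib, sum_sub_distrib, sum_Ici_ite_eq _ _ _ _ _ hh2,
    sum_Ici_ite_eq _ _ _ _ _ (hh1.trans hh2), sum_Ici_ite_eq _ _ _ _ _ (hh2.trans hh3),
    sum_Ici_ite_eq _ _ _ _ _ (hh1.trans (hh2.trans hh3))]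
  ring

theorem memQ_uncross [Fintype D] [NeZero n] [NeZero m] (hx : memQ x)
    (hh1 : h1 ≤ h1') (hh2 : h1' ≤ h2) (hh3 : h2 ≤ h2') (hε : 0 ≤ ε)
    (he1 : ε ≤ x.CY t d h1 h2') (he2 : ε ≤ x.CY t d h1' h2)
    (he3 : x.CY t d h1 h2 + ε ≤ 1) (he4 : x.CY t d h1' h2' + ε ≤ 1) :
    memQ (x.uncross t d h1 h1' h2 h2' ε) := by
  by_cases hdeg : ε = 0 ∨ h1 = h1' ∨ h2 = h2'
  · rwa [uncross_eq_self x t d hdeg]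
  simp only [not_or] at hdeg
  obtain ⟨hε0, hne1, hne2⟩ := hdeg
  obtain ⟨hCY, hB, hDY, hsupp, hBsupp, hinit, hinit0, hBinit, hBinit0, hflow, hlink, hBflow,
    hBlink⟩ := hx
  have ht : 0 ≠ t := by
    rintro rfl
    have := hinit0 d h1 h2' ((Fin.zero_le h2).trans_lt (lt_of_le_of_ne hh3 hne2))
    exact hε0 (le_antisymm (this ▸ he1) hε)
  have hbox (s e a b) : (x.uncross t d h1 h1' h2 h2' ε).CY s e a b ∈ Set.Icc (0 : ℝ) 1 :=
    add_ite_sub_ite_mem_Icc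
      (fun i : Fin (T + 1) × D × Fin n × Fin n => x.CY i.1 i.2.1 i.2.2.1 i.2.2.2)
      (fun i => hCY i.1 i.2.1 i.2.2.1 i.2.2.2) (by simp [hne1]) (by simp [hne1]) hε he3 he4
      he1 he2 (s, e, a, b)
  refine ⟨hbox, hB, hDY, fun s e a b hab => ?_, hBsupp, fun e => ?_, fun e a b hb => ?_, hBinit,
    hBinit0, fun s e a => ?_, fun s e a => ?_, hBflow, hBlink⟩
  · rw [uncross_CY_of_ne_or_not_le x t d hh1 hh2 hh3 e (Or.inr hab)]
    exact hsupp s e a b hab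
  · rw [uncross_CY_of_ne_or_not_le x t d hh1 hh2 hh3 e (Or.inl ht)]
    exact hinit e
  · rw [uncross_CY_of_ne_or_not_le x t d hh1 hh2 hh3 e (Or.inl ht)]
    exact hinit0 e a b hb
  · rw [uncross_sum_Iic x t d hh1 hh2 hh3, uncross_sum_Ici x t d hh1 hh2 hh3]
    exact hflow s e a
  · rw [uncross_sum_Iic x t d hh1 hh2 hh3]
    exact hlink s e a

theorem obj_uncross [Fintype D] (Dcost : Fin (T + 1) → D → Fin n → Fin n → ℝ)
    (Dexp : Fin (T + 1) → D → Fin n → Fin m → ℝ) (Bcost : Fin (T + 1) → Fin m → Fin m → ℝ)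
    (Bexp : Fin (T + 1) → Fin m → ℝ) (hh1 : h1 ≤ h1') (hh2 : h1' ≤ h2) (hh3 : h2 ≤ h2') :
    obj Dcost Dexp Bcost Bexp (x.uncross t d h1 h1' h2 h2' ε) = obj Dcost Dexp Bcost Bexp x
      + (Dcost t d h1 h2 + Dcost t d h1' h2' - Dcost t d h1 h2' - Dcost t d h1' h2) * ε := by
  simp only [obj, uncross, mul_add, mul_sub, sum_add_distrib, sum_sub_distrib,
    sum_sum_sum_Iic_mul_ite _ _ _ _ hh2, sum_sum_sum_Iic_mul_ite _ _ _ _ (hh1.trans hh2),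
    sum_sum_sum_Iic_mul_ite _ _ _ _ (hh2.trans hh3),
    sum_sum_sum_Iic_mul_ite _ _ _ _ (hh1.trans (hh2.trans hh3))]
  ring

theorem obj_uncross_le [Fintype D] {Dcost : Fin (T + 1) → D → Fin n → Fin n → ℝ}
    (hDcost : condIII Dcost) (Dexp : Fin (T + 1) → D → Fin n → Fin m → ℝ)
    (Bcost : Fin (T + 1) → Fin m → Fin m → ℝ) (Bexp : Fin (T + 1) → Fin m → ℝ)
    (hh1 : h1 ≤ h1') (hh2 : h1' ≤ h2) (hh3 : h2 ≤ h2') (hε : 0 ≤ ε) :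
    obj Dcost Dexp Bcost Bexp (x.uncross t d h1 h1' h2 h2' ε) ≤ obj Dcost Dexp Bcost Bexp x := by
  rw [obj_uncross x t d Dcost Dexp Bcost Bexp hh1 hh2 hh3, add_le_iff_nonpos_right]
  exact mul_nonpos_of_nonpos_of_nonneg
    (by linarith [hDcost t d h1 h1' h2 h2' hh1 hh2 hh3]) hε

end DikePoint

theorem statement_6_general (T n m : ℕ) [NeZero n] [NeZero m]
    (D : Type) [Fintype D] [DecidableEq D]
    (Dcost : Fin (T + 1) → D → Fin n → Fin n → ℝ)
    (Dexp : Fin (T + 1) → D → Fin n → Fin m → ℝ)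
    (Bcost : Fin (T + 1) → Fin m → Fin m → ℝ)
    (Bexp : Fin (T + 1) → Fin m → ℝ)
    (x : DikePoint T n m D) (hx : memQ x)
    (t : Fin (T + 1)) (d : D) (h1 h1' h2 h2' : Fin n)
    (hh1 : h1 ≤ h1') (hh2 : h1' ≤ h2) (hh3 : h2 ≤ h2')
    (ε : ℝ) (hε : 0 ≤ ε)
    (he1 : ε ≤ x.CY t d h1 h2') (he2 : ε ≤ x.CY t d h1' h2)
    (he3 : x.CY t d h1 h2 + ε ≤ 1) (he4 : x.CY t d h1' h2' + ε ≤ 1) :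
    let x' : DikePoint T n m D :=
      { CY := fun s e a b => x.CY s e a b
          + (if (s, e, a, b) = (t, d, h1, h2) then ε else 0)
          + (if (s, e, a, b) = (t, d, h1', h2') then ε else 0)
          - (if (s, e, a, b) = (t, d, h1, h2') then ε else 0)
          - (if (s, e, a, b) = (t, d, h1', h2) then ε else 0)
        B := x.B
        DY := x.DY }
    memQ x' ∧ (condIII Dcost →
      obj Dcost Dexp Bcost Bexp x' ≤ obj Dcost Dexp Bcost Bexp x) :=
  ⟨DikePoint.memQ_uncross x t d hx hh1 hh2 hh3 hε he1 he2 he3 he4,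
    fun hDcost => DikePoint.obj_uncross_le x t d hDcost Dexp Bcost Bexp hh1 hh2 hh3 hε⟩

/-- uncrossing of dike flows: decreasing `CY(t,d,h1,h2')` and
`CY(t,d,h1',h2)` by `ε` and increasing `CY(t,d,h1,h2)` and `CY(t,d,h1',h2')`
by `ε` keeps the point in `Q`, and does not increase the objective if
condition (iii) holds. -/
theorem statement_6 (T n m : ℕ) (hT : 1 ≤ T) [NeZero n] [NeZero m]
    (D : Type) [Fintype D] [Nonempty D] [DecidableEq D]
    (Dcost : Fin (T + 1) → D → Fin n → Fin n → ℝ)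
    (Dexp : Fin (T + 1) → D → Fin n → Fin m → ℝ)
    (Bcost : Fin (T + 1) → Fin m → Fin m → ℝ)
    (Bexp : Fin (T + 1) → Fin m → ℝ)
    (hDcost : ∀ t d h1 h2, h1 ≤ h2 → 0 ≤ Dcost t d h1 h2)
    (hDexp : ∀ t d h g, 0 ≤ Dexp t d h g)
    (hBcost : ∀ t g1 g2, g1 ≤ g2 → 0 ≤ Bcost t g1 g2)
    (hBexp : ∀ t g, 0 ≤ Bexp t g)
    (x : DikePoint T n m D) (hx : memQ x)
    (t : Fin (T + 1)) (d : D) (h1 h1' h2 h2' : Fin n)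
    (hh1 : h1 ≤ h1') (hh2 : h1' ≤ h2) (hh3 : h2 ≤ h2')
    (ε : ℝ) (hε : 0 ≤ ε)
    (he1 : ε ≤ x.CY t d h1 h2') (he2 : ε ≤ x.CY t d h1' h2)
    (he3 : x.CY t d h1 h2 + ε ≤ 1) (he4 : x.CY t d h1' h2' + ε ≤ 1) :
    let x' : DikePoint T n m D :=
      { CY := fun s e a b => x.CY s e a b
          + (if (s, e, a, b) = (t, d, h1, h2) then ε else 0)
          + (if (s, e, a, b) = (t, d, h1', h2') then ε else 0)
          - (if (s, e, a, b) = (t, d, h1, h2') then ε else 0)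
          - (if (s, e, a, b) = (t, d, h1', h2) then ε else 0)
        B := x.B
        DY := x.DY }
    memQ x' ∧ (condIII Dcost →
      obj Dcost Dexp Bcost Bexp x' ≤ obj Dcost Dexp Bcost Bexp x) :=
  statement_6_general T n m D Dcost Dexp Bcost Bexp x hx t d h1 h1' h2 h2' hh1 hh2 hh3 ε hε he1 he2
    he3 he4
end

section
/- (Uncrossing of barrier flows.) Let x ∈ Q, let t ∈ {0,…,T}, and let g1 ≤ g1' ≤ g2 ≤ g2' in H_B. Let ε ≥ 0 satisfy ε ≤ B(t,g1,g2'), ε ≤ B(t,g1',g2), B(t,g1,g2)+ε ≤ 1 and B(t,g1',g2')+ε ≤ 1. Define x' from x by decreasing the coordinates B(t,g1,g2') and B(t,g1',g2) by ε and increasing the coordinates B(t,g1,g2) and B(t,g1',g2') by ε, leaving all other coordinates unchanged. Then x' ∈ Q; moreover, if condition (ii) holds, then obj(x') ≤ obj(x). -/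
open Finset

/-!
The perturbation moves mass `ε` from the crossing arcs `(g1, g2')`, `(g1', g2)` to the nested
arcs `(g1, g2)`, `(g1', g2')`. Arcs `(g1, g2)` and `(g1', g2)` enter the same node `g2`, and
`(g1', g2')`, `(g1, g2')` the same node `g2'`, so every inflow is unchanged; likewise every
outflow. Hence all flow and linking constraints survive, and the objective changes by `ε` times
`Bcost(g1,g2) + Bcost(g1',g2') - Bcost(g1,g2') - Bcost(g1',g2)`, which is `≤ 0` by (ii).
-/

section Uncrossing

variable {σ α : Type*} [DecidableEq σ] [DecidableEq α]

def uncrossing (t : σ) (g1 g1' g2 g2' : α) (ε : ℝ) (s : σ) (a b : α) : ℝ :=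
  (if (s, a, b) = (t, g1, g2) then ε else 0) + (if (s, a, b) = (t, g1', g2') then ε else 0)
    - (if (s, a, b) = (t, g1, g2') then ε else 0) - (if (s, a, b) = (t, g1', g2) then ε else 0)

lemma uncrossing_zero (t : σ) (g1 g1' g2 g2' : α) : uncrossing t g1 g1' g2 g2' 0 = 0 := by
  funext s a b
  simp [uncrossing]

lemma uncrossing_self_left (t : σ) (g g2 g2' : α) (ε : ℝ) : uncrossing t g g g2 g2' ε = 0 := by
  funext s a b
  simp only [uncrossing, Pi.zero_apply]
  ring

lemma uncrossing_of_ne {t s : σ} (hs : s ≠ t) (g1 g1' g2 g2' : α) (ε : ℝ) (a b : α) :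
    uncrossing t g1 g1' g2 g2' ε s a b = 0 := by
  simp [uncrossing, hs]

lemma add_uncrossing_mem_Icc {g1 g1' g2 g2' : α} {B : σ → α → α → ℝ}
    (hB : ∀ s a b, B s a b ∈ Set.Icc (0 : ℝ) 1) {t : σ} {ε : ℝ} (hε : 0 ≤ ε)
    (he1 : ε ≤ B t g1 g2') (he2 : ε ≤ B t g1' g2)
    (he3 : B t g1 g2 + ε ≤ 1) (he4 : B t g1' g2' + ε ≤ 1) (s : σ) (a b : α) :
    B s a b + uncrossing t g1 g1' g2 g2' ε s a b ∈ Set.Icc (0 : ℝ) 1 := by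
  have := hB s a b
  rw [Set.mem_Icc] at this ⊢
  simp only [uncrossing]
  split_ifs <;> simp_all only [Prod.mk.injEq, and_self, not_true_eq_false] <;> constructor <;>
    linarith

section Preorder

variable [Preorder α] {g1 g1' g2 g2' : α}

lemma uncrossing_of_not_le (h1 : g1 ≤ g1') (h2 : g1' ≤ g2) (h3 : g2 ≤ g2') (t s : σ) (ε : ℝ)
    {a b : α} (hab : ¬ a ≤ b) : uncrossing t g1 g1' g2 g2' ε s a b = 0 := by
  have hne : ∀ c1 c2 : α, c1 ≤ c2 → (s, a, b) ≠ (t, c1, c2) := by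
    rintro c1 c2 hc ⟨-, rfl, rfl⟩
    exact hab hc
  rw [uncrossing, if_neg (hne _ _ (h1.trans h2)), if_neg (hne _ _ (h2.trans h3)),
    if_neg (hne _ _ (h1.trans (h2.trans h3))), if_neg (hne _ _ h2)]
  simp

lemma sum_Iic_ite_eq [LocallyFiniteOrderBot α] {M : Type*} [AddCommMonoid M] {c1 c2 : α}
    (hc : c1 ≤ c2) (t s : σ) (g : α) (f : α → M) :
    ∑ a ∈ Iic g, (if (s, a, g) = (t, c1, c2) then f a else 0)
      = if (s, g) = (t, c2) then f c1 else 0 := by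
  by_cases hsg : (s, g) = (t, c2)
  · obtain ⟨rfl, rfl⟩ := Prod.mk.inj hsg
    simp [hc]
  · refine (sum_eq_zero fun a _ => if_neg ?_).trans (if_neg hsg).symm
    rintro ⟨rfl, -, rfl⟩
    exact hsg rfl

lemma sum_Ici_ite_eq [LocallyFiniteOrderTop α] {M : Type*} [AddCommMonoid M] {c1 c2 : α}
    (hc : c1 ≤ c2) (t s : σ) (g : α) (f : α → M) :
    ∑ b ∈ Ici g, (if (s, g, b) = (t, c1, c2) then f b else 0)
      = if (s, g) = (t, c1) then f c2 else 0 := by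
  by_cases hsg : (s, g) = (t, c1)
  · obtain ⟨rfl, rfl⟩ := Prod.mk.inj hsg
    simp [hc]
  · refine (sum_eq_zero fun b _ => if_neg ?_).trans (if_neg hsg).symm
    rintro ⟨rfl, rfl, -⟩
    exact hsg rfl

lemma sum_Iic_uncrossing [LocallyFiniteOrderBot α] (h1 : g1 ≤ g1') (h2 : g1' ≤ g2) (h3 : g2 ≤ g2')
    (t s : σ) (ε : ℝ) (g : α) :
    ∑ a ∈ Iic g, uncrossing t g1 g1' g2 g2' ε s a g = 0 := by
  simp only [uncrossing, sum_sub_distrib, sum_add_distrib]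
  simp only [sum_Iic_ite_eq (h1.trans h2), sum_Iic_ite_eq (h2.trans h3),
    sum_Iic_ite_eq (h1.trans (h2.trans h3)), sum_Iic_ite_eq h2]
  ring

lemma sum_Ici_uncrossing [LocallyFiniteOrderTop α] (h1 : g1 ≤ g1') (h2 : g1' ≤ g2) (h3 : g2 ≤ g2')
    (t s : σ) (ε : ℝ) (g : α) :
    ∑ b ∈ Ici g, uncrossing t g1 g1' g2 g2' ε s g b = 0 := by
  simp only [uncrossing, sum_sub_distrib, sum_add_distrib]
  simp only [sum_Ici_ite_eq (h1.trans h2), sum_Ici_ite_eq (h2.trans h3),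
    sum_Ici_ite_eq (h1.trans (h2.trans h3)), sum_Ici_ite_eq h2]
  ring

lemma sum_sum_Iic_ite_eq [Fintype σ] [Fintype α] [LocallyFiniteOrderBot α] {M : Type*}
    [AddCommMonoid M] {c1 c2 : α} (hc : c1 ≤ c2) (t : σ) (f : σ → α → α → M) :
    ∑ s, ∑ b, ∑ a ∈ Iic b, (if (s, a, b) = (t, c1, c2) then f s a b else 0) = f t c1 c2 := by
  simp_rw [sum_Iic_ite_eq hc]
  simp [ite_and]

lemma sum_sum_Iic_mul_uncrossing [Fintype σ] [Fintype α] [LocallyFiniteOrderBot α]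
    (h1 : g1 ≤ g1') (h2 : g1' ≤ g2) (h3 : g2 ≤ g2') (w : σ → α → α → ℝ) (t : σ) (ε : ℝ) :
    ∑ s, ∑ b, ∑ a ∈ Iic b, w s a b * uncrossing t g1 g1' g2 g2' ε s a b
      = ε * (w t g1 g2 + w t g1' g2' - w t g1 g2' - w t g1' g2) := by
  simp only [uncrossing, mul_add, mul_sub, mul_ite, mul_zero, sum_add_distrib, sum_sub_distrib]
  rw [sum_sum_Iic_ite_eq (h1.trans h2), sum_sum_Iic_ite_eq (h2.trans h3),
    sum_sum_Iic_ite_eq (h1.trans (h2.trans h3)), sum_sum_Iic_ite_eq h2]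
  ring

end Preorder

end Uncrossing

section DikePoint

variable {T n m : ℕ} {D : Type} [Fintype D]

lemma memQ_of_B_marginals [NeZero n] [NeZero m] {x y : DikePoint T n m D} (hx : memQ x)
    (hCY : y.CY = x.CY) (hDY : y.DY = x.DY) (hbox : ∀ s a b, y.B s a b ∈ Set.Icc (0 : ℝ) 1)
    (hsupp : ∀ s a b, ¬ a ≤ b → y.B s a b = 0) (hinit : y.B 0 = x.B 0)
    (hin : ∀ s g, ∑ a ∈ Iic g, y.B s a g = ∑ a ∈ Iic g, x.B s a g)
    (hout : ∀ s g, ∑ b ∈ Ici g, y.B s g b = ∑ b ∈ Ici g, x.B s g b) : memQ y := by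
  obtain ⟨hCYbox, -, hDYbox, hCYsupp, -, hCY0, hCY0', hB0, hB0', hCYflow, hCYlink, hBflow,
    hBlink⟩ := hx
  rw [memQ, hCY, hDY, hinit]
  refine ⟨hCYbox, hbox, hDYbox, hCYsupp, hsupp, hCY0, hCY0', hB0, hB0', hCYflow, hCYlink,
    fun τ g => ?_, fun s d g => ?_⟩
  · rw [hin, hout]
    exact hBflow τ g
  · rw [hin]
    exact hBlink s d g

lemma obj_le_of_B_le {Dcost : Fin (T + 1) → D → Fin n → Fin n → ℝ}
    {Dexp : Fin (T + 1) → D → Fin n → Fin m → ℝ} {Bcost : Fin (T + 1) → Fin m → Fin m → ℝ}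
    {Bexp : Fin (T + 1) → Fin m → ℝ} {x y : DikePoint T n m D}
    (hCY : y.CY = x.CY) (hDY : y.DY = x.DY)
    (hB : ∑ t, ∑ g2, ∑ g1 ∈ Iic g2, (Bcost t g1 g2 + Bexp t g2) * y.B t g1 g2
      ≤ ∑ t, ∑ g2, ∑ g1 ∈ Iic g2, (Bcost t g1 g2 + Bexp t g2) * x.B t g1 g2) :
    obj Dcost Dexp Bcost Bexp y ≤ obj Dcost Dexp Bcost Bexp x := by
  rw [obj, obj, hCY, hDY]
  exact add_le_add le_rfl hB

end DikePoint

theorem statement_7_general (T n m : ℕ) [NeZero n] [NeZero m]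
    (D : Type) [Fintype D]
    (Dcost : Fin (T + 1) → D → Fin n → Fin n → ℝ)
    (Dexp : Fin (T + 1) → D → Fin n → Fin m → ℝ)
    (Bcost : Fin (T + 1) → Fin m → Fin m → ℝ)
    (Bexp : Fin (T + 1) → Fin m → ℝ)
    (x : DikePoint T n m D) (hx : memQ x)
    (t : Fin (T + 1)) (g1 g1' g2 g2' : Fin m)
    (hg1 : g1 ≤ g1') (hg2 : g1' ≤ g2) (hg3 : g2 ≤ g2')
    (ε : ℝ) (hε : 0 ≤ ε)
    (he1 : ε ≤ x.B t g1 g2') (he2 : ε ≤ x.B t g1' g2)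
    (he3 : x.B t g1 g2 + ε ≤ 1) (he4 : x.B t g1' g2' + ε ≤ 1) :
    let x' : DikePoint T n m D :=
      { CY := x.CY
        B := fun s a b => x.B s a b
          + (if (s, a, b) = (t, g1, g2) then ε else 0)
          + (if (s, a, b) = (t, g1', g2') then ε else 0)
          - (if (s, a, b) = (t, g1, g2') then ε else 0)
          - (if (s, a, b) = (t, g1', g2) then ε else 0)
        DY := x.DY }
    memQ x' ∧ (condII Bcost →
      obj Dcost Dexp Bcost Bexp x' ≤ obj Dcost Dexp Bcost Bexp x) := by
  intro x'
  obtain ⟨hBbox, -, -, hBsupp, -, -, -, hBinit, -⟩ := hx.2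
  have hB : ∀ s a b, x'.B s a b = x.B s a b + uncrossing t g1 g1' g2 g2' ε s a b := by
    intro s a b
    simp only [x', uncrossing]
    ring
  -- At time `0` the perturbation vanishes: `ε ≤ B(0,g1,g2') = 0` unless all four heights are `0`.
  have hinit : x'.B 0 = x.B 0 := by
    funext a b
    rw [hB, add_eq_left]
    rcases eq_or_ne t 0 with rfl | ht
    · rcases (Fin.zero_le g2').eq_or_lt with hg2' | hg2'
      · have h0 : ∀ g ≤ g2', g = 0 := fun g hg => nonpos_iff_eq_zero.mp (hg.trans hg2'.ge)
        rw [h0 g1 (hg1.trans (hg2.trans hg3)), h0 g1' (hg2.trans hg3), uncrossing_self_left]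
        rfl
      · obtain rfl : ε = 0 := le_antisymm (he1.trans_eq (hBinit g1 g2' hg2')) hε
        rw [uncrossing_zero]
        rfl
    · exact uncrossing_of_ne (Ne.symm ht) _ _ _ _ _ _ _
  refine ⟨memQ_of_B_marginals hx rfl rfl ?_ ?_ hinit ?_ ?_, fun hII => obj_le_of_B_le rfl rfl ?_⟩
  · simpa only [hB] using add_uncrossing_mem_Icc hBbox hε he1 he2 he3 he4
  · intro s a b hab
    rw [hB, hBsupp s a b hab, uncrossing_of_not_le hg1 hg2 hg3 t s ε hab, add_zero]
  · intro s g
    simp only [hB, sum_add_distrib, sum_Iic_uncrossing hg1 hg2 hg3, add_zero]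
  · intro s g
    simp only [hB, sum_add_distrib, sum_Ici_uncrossing hg1 hg2 hg3, add_zero]
  · simp only [hB, mul_add, sum_add_distrib, sum_sum_Iic_mul_uncrossing hg1 hg2 hg3]
    refine add_le_of_nonpos_right (mul_nonpos_of_nonneg_of_nonpos hε ?_)
    linarith [hII t g1 g1' g2 g2' hg1 hg2 hg3]

/-- uncrossing of barrier flows: decreasing `B(t,g1,g2')` and
`B(t,g1',g2)` by `ε` and increasing `B(t,g1,g2)` and `B(t,g1',g2')` by `ε`
keeps the point in `Q`, and does not increase the objective if
condition (ii) holds. -/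
theorem statement_7 (T n m : ℕ) (hT : 1 ≤ T) [NeZero n] [NeZero m]
    (D : Type) [Fintype D] [Nonempty D]
    (Dcost : Fin (T + 1) → D → Fin n → Fin n → ℝ)
    (Dexp : Fin (T + 1) → D → Fin n → Fin m → ℝ)
    (Bcost : Fin (T + 1) → Fin m → Fin m → ℝ)
    (Bexp : Fin (T + 1) → Fin m → ℝ)
    (hDcost : ∀ t d h1 h2, h1 ≤ h2 → 0 ≤ Dcost t d h1 h2)
    (hDexp : ∀ t d h g, 0 ≤ Dexp t d h g)
    (hBcost : ∀ t g1 g2, g1 ≤ g2 → 0 ≤ Bcost t g1 g2)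
    (hBexp : ∀ t g, 0 ≤ Bexp t g)
    (x : DikePoint T n m D) (hx : memQ x)
    (t : Fin (T + 1)) (g1 g1' g2 g2' : Fin m)
    (hg1 : g1 ≤ g1') (hg2 : g1' ≤ g2) (hg3 : g2 ≤ g2')
    (ε : ℝ) (hε : 0 ≤ ε)
    (he1 : ε ≤ x.B t g1 g2') (he2 : ε ≤ x.B t g1' g2)
    (he3 : x.B t g1 g2 + ε ≤ 1) (he4 : x.B t g1' g2' + ε ≤ 1) :
    let x' : DikePoint T n m D :=
      { CY := x.CY
        B := fun s a b => x.B s a b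
          + (if (s, a, b) = (t, g1, g2) then ε else 0)
          + (if (s, a, b) = (t, g1', g2') then ε else 0)
          - (if (s, a, b) = (t, g1, g2') then ε else 0)
          - (if (s, a, b) = (t, g1', g2) then ε else 0)
        DY := x.DY }
    memQ x' ∧ (condII Bcost →
      obj Dcost Dexp Bcost Bexp x' ≤ obj Dcost Dexp Bcost Bexp x) :=
  statement_7_general T n m D Dcost Dexp Bcost Bexp x hx t g1 g1' g2 g2' hg1 hg2 hg3 ε hε he1 he2
    he3 he4
end

section
/- (DY reassignment.) Let x ∈ Q, let t ∈ {0,…,T}, d ∈ D, h ≤ h' in H_D and g ≤ g' in H_B. Let ε ≥ 0 satisfy ε ≤ DY(t,d,h',g), ε ≤ DY(t,d,h,g'), DY(t,d,h,g)+ε ≤ 1 and DY(t,d,h',g')+ε ≤ 1. Define x' from x by decreasing the coordinates DY(t,d,h',g) and DY(t,d,h,g') by ε and increasing the coordinates DY(t,d,h,g) and DY(t,d,h',g') by ε, leaving all other coordinates unchanged. Then x' ∈ Q; moreover, if condition (i) holds, then obj(x') ≤ obj(x). -/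
open Finset

/-!
Writing `1_a` for the indicator of `a`, the move adds to `DY t d` the matrix
`ε • (1_h - 1_h') ⊗ (1_g - 1_g')`, whose row and column sums vanish. The linking constraints see DY only through
these sums, so only the box constraints need checking, and the objective changes by
`ε (Dexp h g + Dexp h' g' - Dexp h' g - Dexp h g')`, which condition (i) makes nonpositive.
-/

section RectSwap

variable {α β : Type*} [DecidableEq α] [DecidableEq β]

def rectSwap (a a' : α) (b b' : β) (ε : ℝ) (x : α) (y : β) : ℝ :=
  ε * ((if x = a then 1 else 0) - (if x = a' then 1 else 0)) *
    ((if y = b then 1 else 0) - (if y = b' then 1 else 0))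

theorem sum_rectSwap_right [Fintype β] (a a' : α) (b b' : β) (ε : ℝ) (x : α) :
    ∑ y, rectSwap a a' b b' ε x y = 0 := by
  simp [rectSwap, ← mul_sum, sum_sub_distrib]

theorem sum_rectSwap_left [Fintype α] (a a' : α) (b b' : β) (ε : ℝ) (y : β) :
    ∑ x, rectSwap a a' b b' ε x y = 0 := by
  simp [rectSwap, ← sum_mul, ← mul_sum, sum_sub_distrib]

theorem sum_mul_rectSwap [Fintype α] [Fintype β] (w : α → β → ℝ) (a a' : α) (b b' : β) (ε : ℝ) :
    ∑ x, ∑ y, w x y * rectSwap a a' b b' ε x y = ε * (w a b + w a' b' - w a' b - w a b') := by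
  simp only [rectSwap, mul_sub, mul_ite, mul_one, mul_zero, sum_sub_distrib, sum_ite_eq', mem_univ,
    ↓reduceIte]
  ring

theorem add_rectSwap_mem_Icc {M : α → β → ℝ} (hM : ∀ x y, M x y ∈ Set.Icc 0 1)
    {a a' : α} {b b' : β} {ε : ℝ} (hε : 0 ≤ ε) (h₁ : ε ≤ M a' b) (h₂ : ε ≤ M a b')
    (h₃ : M a b + ε ≤ 1) (h₄ : M a' b' + ε ≤ 1) (x : α) (y : β) :
    M x y + rectSwap a a' b b' ε x y ∈ Set.Icc 0 1 := by
  obtain ⟨hlo, hhi⟩ := hM x y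
  clear hM
  rw [Set.mem_Icc, rectSwap]
  by_cases hxa : x = a <;> by_cases hxa' : x = a' <;> by_cases hyb : y = b <;>
    by_cases hyb' : y = b' <;> subst_vars <;> simp_all <;> linarith

end RectSwap

namespace DikePoint

variable {T n m : ℕ} {D : Type} [DecidableEq D]

def perturbDY (x : DikePoint T n m D) (t : Fin (T + 1)) (d : D) (δ : Fin n → Fin m → ℝ) :
    DikePoint T n m D :=
  { x with DY := fun s e a b => x.DY s e a b + if s = t ∧ e = d then δ a b else 0 }

theorem sum_perturbDY_DY_right [Fintype D] (x : DikePoint T n m D) (t : Fin (T + 1)) (d : D)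
    {δ : Fin n → Fin m → ℝ} (hrow : ∀ a, ∑ b, δ a b = 0) (s : Fin (T + 1)) (e : D) (a : Fin n) :
    ∑ b, (x.perturbDY t d δ).DY s e a b = ∑ b, x.DY s e a b := by
  by_cases hse : s = t ∧ e = d
  · simp [perturbDY, hse, sum_add_distrib, hrow]
  · simp [perturbDY, hse]

theorem sum_perturbDY_DY_left [Fintype D] (x : DikePoint T n m D) (t : Fin (T + 1)) (d : D)
    {δ : Fin n → Fin m → ℝ} (hcol : ∀ b, ∑ a, δ a b = 0) (s : Fin (T + 1)) (e : D) (b : Fin m) :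
    ∑ a, (x.perturbDY t d δ).DY s e a b = ∑ a, x.DY s e a b := by
  by_cases hse : s = t ∧ e = d
  · simp [perturbDY, hse, sum_add_distrib, hcol]
  · simp [perturbDY, hse]

theorem memQ_perturbDY [Fintype D] [NeZero n] [NeZero m] {x : DikePoint T n m D}
    (hx : memQ x) {t : Fin (T + 1)} {d : D} {δ : Fin n → Fin m → ℝ}
    (hbox : ∀ a b, x.DY t d a b + δ a b ∈ Set.Icc 0 1)
    (hrow : ∀ a, ∑ b, δ a b = 0) (hcol : ∀ b, ∑ a, δ a b = 0) :
    memQ (x.perturbDY t d δ) := by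
  obtain ⟨hCY, hB, hDY, hCY0, hB0, hCYinit, hCYinit', hBinit, hBinit', hCYflow, hCYlink,
    hBflow, hBlink⟩ := hx
  refine ⟨hCY, hB, fun s e a b => ?_, hCY0, hB0, hCYinit, hCYinit', hBinit, hBinit', hCYflow,
    fun s e a => (hCYlink s e a).trans (sum_perturbDY_DY_right x t d hrow s e a).symm, hBflow,
    fun s e b => (hBlink s e b).trans (sum_perturbDY_DY_left x t d hcol s e b).symm⟩
  by_cases hse : s = t ∧ e = d
  · obtain ⟨rfl, rfl⟩ := hse
    simpa [perturbDY] using hbox a b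
  · simpa [perturbDY, hse] using hDY s e a b

theorem obj_perturbDY [Fintype D]
    (Dcost : Fin (T + 1) → D → Fin n → Fin n → ℝ)
    (Dexp : Fin (T + 1) → D → Fin n → Fin m → ℝ)
    (Bcost : Fin (T + 1) → Fin m → Fin m → ℝ)
    (Bexp : Fin (T + 1) → Fin m → ℝ)
    (x : DikePoint T n m D) (t : Fin (T + 1)) (d : D) (δ : Fin n → Fin m → ℝ) :
    obj Dcost Dexp Bcost Bexp (x.perturbDY t d δ) =
      obj Dcost Dexp Bcost Bexp x + ∑ a, ∑ b, Dexp t d a b * δ a b := by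
  simp only [obj, perturbDY, ite_and, mul_add, mul_ite, mul_zero, sum_add_distrib, sum_ite_irrel,
    sum_const_zero, sum_ite_eq', mem_univ, ↓reduceIte]
  ring

theorem perturbDY_rectSwap_eq_mk (x : DikePoint T n m D) (t : Fin (T + 1)) (d : D)
    (h h' : Fin n) (g g' : Fin m) (ε : ℝ) :
    x.perturbDY t d (rectSwap h h' g g' ε) =
      { CY := x.CY, B := x.B,
        DY := fun s e a b => x.DY s e a b
          + (if (s, e, a, b) = (t, d, h, g) then ε else 0)
          + (if (s, e, a, b) = (t, d, h', g') then ε else 0)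
          - (if (s, e, a, b) = (t, d, h', g) then ε else 0)
          - (if (s, e, a, b) = (t, d, h, g') then ε else 0) } := by
  simp only [perturbDY, mk.injEq, true_and]
  funext s e a b
  by_cases hse : s = t ∧ e = d
  · obtain ⟨rfl, rfl⟩ := hse
    simp only [rectSwap, Prod.mk.injEq, true_and, and_self, if_true, ite_and]
    split_ifs <;> ring
  · simp [← and_assoc, hse]

end DikePoint

theorem statement_8_general (T n m : ℕ) [NeZero n] [NeZero m]
    (D : Type) [Fintype D] [DecidableEq D]
    (Dcost : Fin (T + 1) → D → Fin n → Fin n → ℝ)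
    (Dexp : Fin (T + 1) → D → Fin n → Fin m → ℝ)
    (Bcost : Fin (T + 1) → Fin m → Fin m → ℝ)
    (Bexp : Fin (T + 1) → Fin m → ℝ)
    (x : DikePoint T n m D) (hx : memQ x)
    (t : Fin (T + 1)) (d : D) (h h' : Fin n) (g g' : Fin m)
    (hh : h ≤ h') (hg : g ≤ g')
    (ε : ℝ) (hε : 0 ≤ ε)
    (he1 : ε ≤ x.DY t d h' g) (he2 : ε ≤ x.DY t d h g')
    (he3 : x.DY t d h g + ε ≤ 1) (he4 : x.DY t d h' g' + ε ≤ 1) :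
    let x' : DikePoint T n m D :=
      { CY := x.CY
        B := x.B
        DY := fun s e a b => x.DY s e a b
          + (if (s, e, a, b) = (t, d, h, g) then ε else 0)
          + (if (s, e, a, b) = (t, d, h', g') then ε else 0)
          - (if (s, e, a, b) = (t, d, h', g) then ε else 0)
          - (if (s, e, a, b) = (t, d, h, g') then ε else 0) }
    memQ x' ∧ (condI Dexp →
      obj Dcost Dexp Bcost Bexp x' ≤ obj Dcost Dexp Bcost Bexp x) := by
  rw [← DikePoint.perturbDY_rectSwap_eq_mk]
  refine ⟨DikePoint.memQ_perturbDY hx (add_rectSwap_mem_Icc (hx.2.2.1 t d) hε he1 he2 he3 he4)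
    (sum_rectSwap_right h h' g g' ε) (sum_rectSwap_left h h' g g' ε), fun hI => ?_⟩
  rw [DikePoint.obj_perturbDY, sum_mul_rectSwap]
  exact add_le_of_nonpos_right
    (mul_nonpos_of_nonneg_of_nonpos hε (by linarith [hI t d h h' g g' hh hg]))

/-- DY reassignment: decreasing `DY(t,d,h',g)` and `DY(t,d,h,g')`
by `ε` and increasing `DY(t,d,h,g)` and `DY(t,d,h',g')` by `ε` keeps the point
in `Q`, and does not increase the objective if condition (i) holds. -/
theorem statement_8 (T n m : ℕ) (hT : 1 ≤ T) [NeZero n] [NeZero m]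
    (D : Type) [Fintype D] [Nonempty D] [DecidableEq D]
    (Dcost : Fin (T + 1) → D → Fin n → Fin n → ℝ)
    (Dexp : Fin (T + 1) → D → Fin n → Fin m → ℝ)
    (Bcost : Fin (T + 1) → Fin m → Fin m → ℝ)
    (Bexp : Fin (T + 1) → Fin m → ℝ)
    (hDcost : ∀ t d h1 h2, h1 ≤ h2 → 0 ≤ Dcost t d h1 h2)
    (hDexp : ∀ t d h g, 0 ≤ Dexp t d h g)
    (hBcost : ∀ t g1 g2, g1 ≤ g2 → 0 ≤ Bcost t g1 g2)
    (hBexp : ∀ t g, 0 ≤ Bexp t g)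
    (x : DikePoint T n m D) (hx : memQ x)
    (t : Fin (T + 1)) (d : D) (h h' : Fin n) (g g' : Fin m)
    (hh : h ≤ h') (hg : g ≤ g')
    (ε : ℝ) (hε : 0 ≤ ε)
    (he1 : ε ≤ x.DY t d h' g) (he2 : ε ≤ x.DY t d h g')
    (he3 : x.DY t d h g + ε ≤ 1) (he4 : x.DY t d h' g' + ε ≤ 1) :
    let x' : DikePoint T n m D :=
      { CY := x.CY
        B := x.B
        DY := fun s e a b => x.DY s e a b
          + (if (s, e, a, b) = (t, d, h, g) then ε else 0)
          + (if (s, e, a, b) = (t, d, h', g') then ε else 0)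
          - (if (s, e, a, b) = (t, d, h', g) then ε else 0)
          - (if (s, e, a, b) = (t, d, h, g') then ε else 0) }
    memQ x' ∧ (condI Dexp →
      obj Dcost Dexp Bcost Bexp x' ≤ obj Dcost Dexp Bcost Bexp x) :=
  statement_8_general T n m D Dcost Dexp Bcost Bexp x hx t d h h' g g' hh hg ε hε he1 he2 he3 he4
end

section
/- (Reversed DY reassignment.) Let x ∈ Q, let t ∈ {0,…,T}, d ∈ D, h ≤ h' in H_D and g ≤ g' in H_B. Let ε ≥ 0 satisfy ε ≤ DY(t,d,h,g), ε ≤ DY(t,d,h',g'), DY(t,d,h',g)+ε ≤ 1 and DY(t,d,h,g')+ε ≤ 1. Define x' from x by decreasing the coordinates DY(t,d,h,g) and DY(t,d,h',g') by ε and increasing the coordinates DY(t,d,h',g) and DY(t,d,h,g') by ε, leaving all other coordinates unchanged. Then x' ∈ Q; moreover, if the reversed inequality D_expdam(t,d,h',g)+D_expdam(t,d,h,g') ≤ D_expdam(t,d,h,g)+D_expdam(t,d,h',g') holds for all t, d, h ≤ h' and g ≤ g', then obj(x') ≤ obj(x). -/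
/-!
Inside the slice `(t, d)` the move adds `ε (e_{h'} - e_h) ⊗ (e_g - e_{g'})` to `DY`, and nothing
elsewhere. Both factors have coordinate sum zero, so the outer product has zero row and column
sums: the linking constraints, the only ones involving `DY`, survive, and the bounds on `ε` keep
the four modified entries in `[0, 1]`. The objective changes by
`ε (Dexp(h',g) + Dexp(h,g') - Dexp(h,g) - Dexp(h',g'))`, which the reversed inequality makes `≤ 0`.
-/

open Finset

open Finset

section CornerShift

variable {τ κ α β : Type*} [DecidableEq τ] [DecidableEq κ] [DecidableEq α] [DecidableEq β]

def unitDiff (i j : α) (a : α) : ℝ := (if a = j then 1 else 0) - (if a = i then 1 else 0)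

theorem sum_mul_unitDiff [Fintype α] (f : α → ℝ) (i j : α) :
    ∑ a, f a * unitDiff i j a = f j - f i := by
  simp [unitDiff, mul_sub, sum_sub_distrib]

theorem sum_unitDiff [Fintype α] (i j : α) : ∑ a, unitDiff i j a = 0 := by
  simpa using sum_mul_unitDiff (fun _ => (1 : ℝ)) i j

theorem unitDiff_cases (i j a : α) :
    unitDiff i j a = 0 ∨ (unitDiff i j a = 1 ∧ a = j) ∨ (unitDiff i j a = -1 ∧ a = i) := by
  unfold unitDiff
  split_ifs <;> simp_all

theorem sum_sum_ite_prod_eq [Fintype τ] [Fintype κ] {M : Type*} [AddCommMonoid M]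
    (F : τ → κ → M) (t : τ) (d : κ) :
    ∑ s, ∑ e, (if (s, e) = (t, d) then F s e else 0) = F t d := by
  rw [← Fintype.sum_prod_type' (fun s e => if (s, e) = (t, d) then F s e else 0)]
  exact Fintype.sum_ite_eq' (t, d) fun p => F p.1 p.2

def cornerShift (ε : ℝ) (t : τ) (d : κ) (h h' : α) (g g' : β)
    (s : τ) (e : κ) (a : α) (b : β) : ℝ :=
  if (s, e) = (t, d) then ε * (unitDiff h h' a * unitDiff g' g b) else 0

theorem cornerShift_apply (ε : ℝ) (t : τ) (d : κ) (h h' : α) (g g' : β)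
    (s : τ) (e : κ) (a : α) (b : β) :
    cornerShift ε t d h h' g g' s e a b =
      (if (s, e, a, b) = (t, d, h', g) then ε else 0)
        + (if (s, e, a, b) = (t, d, h, g') then ε else 0)
        - (if (s, e, a, b) = (t, d, h, g) then ε else 0)
        - (if (s, e, a, b) = (t, d, h', g') then ε else 0) := by
  by_cases hse : (s, e) = (t, d)
  · obtain ⟨rfl, rfl⟩ := Prod.ext_iff.mp hse
    simp only [cornerShift, unitDiff, Prod.mk.injEq, true_and, if_true]
    split_ifs <;> simp_all
  · obtain hs | he : s ≠ t ∨ e ≠ d := by rw [Ne, Ne, ← not_and_or, ← Prod.mk.injEq]; exact hse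
    · simp [cornerShift, hs]
    · simp [cornerShift, he]

theorem sum_cornerShift_right [Fintype β] (ε : ℝ) (t : τ) (d : κ) (h h' : α) (g g' : β)
    (s : τ) (e : κ) (a : α) : ∑ b, cornerShift ε t d h h' g g' s e a b = 0 := by
  unfold cornerShift
  split_ifs
  · simp [← mul_sum, sum_unitDiff]
  · simp

theorem sum_cornerShift_left [Fintype α] (ε : ℝ) (t : τ) (d : κ) (h h' : α) (g g' : β)
    (s : τ) (e : κ) (b : β) : ∑ a, cornerShift ε t d h h' g g' s e a b = 0 := by
  unfold cornerShift
  split_ifs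
  · simp [mul_comm (unitDiff h h' _), ← mul_sum, sum_unitDiff]
  · simp

theorem sum_mul_cornerShift [Fintype τ] [Fintype κ] [Fintype α] [Fintype β]
    (w : τ → κ → α → β → ℝ) (ε : ℝ) (t : τ) (d : κ) (h h' : α) (g g' : β) :
    ∑ s, ∑ e, ∑ a, ∑ b, w s e a b * cornerShift ε t d h h' g g' s e a b =
      ε * (w t d h' g + w t d h g' - w t d h g - w t d h' g') := by
  have slice : ∀ s e, ∑ a, ∑ b, w s e a b * cornerShift ε t d h h' g g' s e a b =
      if (s, e) = (t, d) then ε * (w t d h' g + w t d h g' - w t d h g - w t d h' g') else 0 := by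
    intro s e
    unfold cornerShift
    split_ifs with hse
    · obtain ⟨rfl, rfl⟩ := Prod.ext_iff.mp hse
      have row : ∀ a, ∑ b, w s e a b * (ε * (unitDiff h h' a * unitDiff g' g b)) =
          (w s e a g - w s e a g') * unitDiff h h' a * ε := fun a => by
        rw [← sum_mul_unitDiff, sum_mul, sum_mul]
        exact sum_congr rfl fun b _ => by ring
      simp only [row, ← sum_mul, sum_mul_unitDiff (fun a => w s e a g - w s e a g')]
      ring
    · simp
  simp only [slice, sum_sum_ite_prod_eq]

theorem add_cornerShift_mem_Icc (x : τ → κ → α → β → ℝ)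
    (hx : ∀ s e a b, x s e a b ∈ Set.Icc (0 : ℝ) 1) {ε : ℝ} (hε : 0 ≤ ε)
    {t : τ} {d : κ} {h h' : α} {g g' : β}
    (he1 : ε ≤ x t d h g) (he2 : ε ≤ x t d h' g')
    (he3 : x t d h' g + ε ≤ 1) (he4 : x t d h g' + ε ≤ 1) (s : τ) (e : κ) (a : α) (b : β) :
    x s e a b + cornerShift ε t d h h' g g' s e a b ∈ Set.Icc (0 : ℝ) 1 := by
  unfold cornerShift
  split_ifs with hse
  · obtain ⟨rfl, rfl⟩ := Prod.ext_iff.mp hse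
    obtain ⟨hx0, hx1⟩ := hx s e a b
    rcases unitDiff_cases h h' a with hu | ⟨hu, rfl⟩ | ⟨hu, rfl⟩ <;>
    rcases unitDiff_cases g' g b with hv | ⟨hv, rfl⟩ | ⟨hv, rfl⟩ <;>
    simp only [hu, hv, Set.mem_Icc] <;> constructor <;> linarith
  · simpa using hx s e a b

end CornerShift

section DikePoint

variable {T n m : ℕ} {D : Type} [Fintype D]

theorem memQ_mk_DY [NeZero n] [NeZero m] {x : DikePoint T n m D} (hx : memQ x)
    (y : Fin (T + 1) → D → Fin n → Fin m → ℝ) (hy : ∀ t d h g, y t d h g ∈ Set.Icc (0 : ℝ) 1)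
    (hrow : ∀ t d h, ∑ g, y t d h g = ∑ g, x.DY t d h g)
    (hcol : ∀ t d g, ∑ h, y t d h g = ∑ h, x.DY t d h g) :
    memQ ⟨x.CY, x.B, y⟩ := by
  obtain ⟨hCY, hB, -, hCYm, hBm, hCY0, hCY0', hB0, hB0', hfC, hlC, hfB, hlB⟩ := hx
  exact ⟨hCY, hB, hy, hCYm, hBm, hCY0, hCY0', hB0, hB0', hfC,
    fun t d h => (hlC t d h).trans (hrow t d h).symm, hfB,
    fun t d g => (hlB t d g).trans (hcol t d g).symm⟩

theorem obj_mk_DY_add (Dcost : Fin (T + 1) → D → Fin n → Fin n → ℝ)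
    (Dexp : Fin (T + 1) → D → Fin n → Fin m → ℝ) (Bcost : Fin (T + 1) → Fin m → Fin m → ℝ)
    (Bexp : Fin (T + 1) → Fin m → ℝ) (x : DikePoint T n m D)
    (δ : Fin (T + 1) → D → Fin n → Fin m → ℝ) :
    obj Dcost Dexp Bcost Bexp ⟨x.CY, x.B, fun t d h g => x.DY t d h g + δ t d h g⟩ =
      obj Dcost Dexp Bcost Bexp x + ∑ t, ∑ d, ∑ h, ∑ g, Dexp t d h g * δ t d h g := by
  simp only [obj, mul_add, sum_add_distrib]
  ring

end DikePoint

theorem statement_9_general (T n m : ℕ) [NeZero n] [NeZero m]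
    (D : Type) [Fintype D] [DecidableEq D]
    (Dcost : Fin (T + 1) → D → Fin n → Fin n → ℝ)
    (Dexp : Fin (T + 1) → D → Fin n → Fin m → ℝ)
    (Bcost : Fin (T + 1) → Fin m → Fin m → ℝ)
    (Bexp : Fin (T + 1) → Fin m → ℝ)
    (x : DikePoint T n m D) (hx : memQ x)
    (t : Fin (T + 1)) (d : D) (h h' : Fin n) (g g' : Fin m)
    (hh : h ≤ h') (hg : g ≤ g')
    (ε : ℝ) (hε : 0 ≤ ε)
    (he1 : ε ≤ x.DY t d h g) (he2 : ε ≤ x.DY t d h' g')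
    (he3 : x.DY t d h' g + ε ≤ 1) (he4 : x.DY t d h g' + ε ≤ 1) :
    let x' : DikePoint T n m D :=
      { CY := x.CY
        B := x.B
        DY := fun s e a b => x.DY s e a b
          + (if (s, e, a, b) = (t, d, h', g) then ε else 0)
          + (if (s, e, a, b) = (t, d, h, g') then ε else 0)
          - (if (s, e, a, b) = (t, d, h, g) then ε else 0)
          - (if (s, e, a, b) = (t, d, h', g') then ε else 0) }
    memQ x' ∧
      ((∀ (s : Fin (T + 1)) (e : D) (a a' : Fin n) (b b' : Fin m),
          a ≤ a' → b ≤ b' →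
          Dexp s e a' b + Dexp s e a b' ≤ Dexp s e a b + Dexp s e a' b') →
        obj Dcost Dexp Bcost Bexp x' ≤ obj Dcost Dexp Bcost Bexp x) := by
  intro x'
  have hx' : x' =
      ⟨x.CY, x.B, fun s e a b => x.DY s e a b + cornerShift ε t d h h' g g' s e a b⟩ := by
    simp only [x', cornerShift_apply, add_sub_assoc, add_assoc]
  have hDY : ∀ s e a b, x.DY s e a b ∈ Set.Icc (0 : ℝ) 1 := hx.2.2.1
  rw [hx']
  refine ⟨memQ_mk_DY hx _ (add_cornerShift_mem_Icc x.DY hDY hε he1 he2 he3 he4) ?_ ?_,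
    fun hrev => ?_⟩
  · simp [sum_add_distrib, sum_cornerShift_right]
  · simp [sum_add_distrib, sum_cornerShift_left]
  · rw [obj_mk_DY_add, sum_mul_cornerShift]
    nlinarith [hrev t d h h' g g' hh hg]

/-- reversed DY reassignment: decreasing `DY(t,d,h,g)` and
`DY(t,d,h',g')` by `ε` and increasing `DY(t,d,h',g)` and `DY(t,d,h,g')` by `ε`
keeps the point in `Q`, and does not increase the objective if the reversed
inequality on the expected damages holds. -/
theorem statement_9 (T n m : ℕ) (hT : 1 ≤ T) [NeZero n] [NeZero m]
    (D : Type) [Fintype D] [Nonempty D] [DecidableEq D]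
    (Dcost : Fin (T + 1) → D → Fin n → Fin n → ℝ)
    (Dexp : Fin (T + 1) → D → Fin n → Fin m → ℝ)
    (Bcost : Fin (T + 1) → Fin m → Fin m → ℝ)
    (Bexp : Fin (T + 1) → Fin m → ℝ)
    (hDcost : ∀ t d h1 h2, h1 ≤ h2 → 0 ≤ Dcost t d h1 h2)
    (hDexp : ∀ t d h g, 0 ≤ Dexp t d h g)
    (hBcost : ∀ t g1 g2, g1 ≤ g2 → 0 ≤ Bcost t g1 g2)
    (hBexp : ∀ t g, 0 ≤ Bexp t g)
    (x : DikePoint T n m D) (hx : memQ x)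
    (t : Fin (T + 1)) (d : D) (h h' : Fin n) (g g' : Fin m)
    (hh : h ≤ h') (hg : g ≤ g')
    (ε : ℝ) (hε : 0 ≤ ε)
    (he1 : ε ≤ x.DY t d h g) (he2 : ε ≤ x.DY t d h' g')
    (he3 : x.DY t d h' g + ε ≤ 1) (he4 : x.DY t d h g' + ε ≤ 1) :
    let x' : DikePoint T n m D :=
      { CY := x.CY
        B := x.B
        DY := fun s e a b => x.DY s e a b
          + (if (s, e, a, b) = (t, d, h', g) then ε else 0)
          + (if (s, e, a, b) = (t, d, h, g') then ε else 0)
          - (if (s, e, a, b) = (t, d, h, g) then ε else 0)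
          - (if (s, e, a, b) = (t, d, h', g') then ε else 0) }
    memQ x' ∧
      ((∀ (s : Fin (T + 1)) (e : D) (a a' : Fin n) (b b' : Fin m),
          a ≤ a' → b ≤ b' →
          Dexp s e a' b + Dexp s e a b' ≤ Dexp s e a b + Dexp s e a' b') →
        obj Dcost Dexp Bcost Bexp x' ≤ obj Dcost Dexp Bcost Bexp x) :=
  statement_9_general T n m D Dcost Dexp Bcost Bexp x hx t d h h' g g' hh hg ε hε he1 he2 he3 he4
end

section
/- (Integral feasible points yield profiles.) For every integral point x of the polytope Q there exist a barrier height profile hb and a family of dike height profiles (hd)_{d∈D} such that x is exactly the associated 0-1 point (i.e., CY(t,d,h1,h2)=1 iff (h1,h2)=(hd(t−1),hd(t)), B(t,g1,g2)=1 iff (g1,g2)=(hb(t−1),hb(t)), DY(t,d,h,g)=1 iff (h,g)=(hd(t),hb(t)), with hd(−1)=hb(−1)=0, and all other coordinates 0); in particular obj(x) equals the profile cost of ((hd)_{d∈D}, hb). -/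
/-!
Under integrality every time layer of a flow (the `B`-layers, and the `CY`-layers of each
segment) is a 0-1 matrix supported on pairs `g1 ≤ g2`. Flow conservation preserves the
total mass of a layer, which is `1` at time `0`, so each layer is the indicator of a
single pair `(a t, b t)`; conservation at height `b t` then forces `a (t + 1) = b t`,
and `b` is the height profile. The linking constraints prescribe the row and column
sums of each `DY`-layer as indicators of `hd d t` and `hb t`, which pins the layer down
as well. Substituting these indicators into the objective collapses it to the profile
cost.
-/

open Finset

/-- The value of a height profile at the previous time step, with value `z`
at "time −1" (i.e. when `t = 0`). -/
def prevH {k : ℕ} {α : Type} (f : Fin (k + 1) → α) (z : α) (t : Fin (k + 1)) : α :=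
  if (t : ℕ) = 0 then z else f ⟨(t : ℕ) - 1, by have := t.isLt; omega⟩

/-- The total cost of a family of dike height profiles `hd` together with a
barrier height profile `hb` (profiles extended by value `0` at time `−1`). -/
noncomputable def profileCost {T n m : ℕ} {D : Type} [Fintype D] [NeZero n] [NeZero m]
    (Dcost : Fin (T + 1) → D → Fin n → Fin n → ℝ)
    (Dexp : Fin (T + 1) → D → Fin n → Fin m → ℝ)
    (Bcost : Fin (T + 1) → Fin m → Fin m → ℝ)
    (Bexp : Fin (T + 1) → Fin m → ℝ)
    (hd : D → Fin (T + 1) → Fin n) (hb : Fin (T + 1) → Fin m) : ℝ :=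
  ∑ t, (Bcost t (prevH hb 0 t) (hb t) + Bexp t (hb t) +
    ∑ d, (Dcost t d (prevH (hd d) 0 t) (hd d t) + Dexp t d (hd d t) (hb t)))

/-- The 0-1 point of the polytope associated with a family of dike height
profiles and a barrier height profile. -/
noncomputable def profilePoint {T n m : ℕ} {D : Type} [NeZero n] [NeZero m]
    (hd : D → Fin (T + 1) → Fin n) (hb : Fin (T + 1) → Fin m) :
    DikePoint T n m D where
  CY := fun t d h1 h2 => if h1 = prevH (hd d) 0 t ∧ h2 = hd d t then 1 else 0
  B := fun t g1 g2 => if g1 = prevH hb 0 t ∧ g2 = hb t then 1 else 0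
  DY := fun t d h g => if h = hd d t ∧ g = hb t then 1 else 0

lemma prevH_zero {k : ℕ} {α : Type} (f : Fin (k + 1) → α) (z : α) : prevH f z 0 = z :=
  if_pos rfl

lemma prevH_succ {k : ℕ} {α : Type} (f : Fin (k + 1) → α) (z : α) (i : Fin k) :
    prevH f z i.succ = f i.castSucc :=
  if_neg (Nat.succ_ne_zero i)

section ZeroOne

variable {ι R : Type*} [AddCommMonoidWithOne R] [CharZero R]

lemma exists_eq_ite_of_sum_eq_one [Fintype ι] [DecidableEq ι] {f : ι → R}
    (hf : ∀ i, f i = 0 ∨ f i = 1) (hsum : ∑ i, f i = 1) :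
    ∃ p, ∀ i, f i = if i = p then 1 else 0 := by
  classical
  have hcard : #{i | f i = 1} = 1 := by
    have hboole : ∑ i, f i = ∑ i, if f i = 1 then (1 : R) else 0 :=
      sum_congr rfl fun i _ => by rcases hf i with h | h <;> simp [h]
    rw [hboole, sum_boole] at hsum
    exact_mod_cast hsum
  obtain ⟨p, hp⟩ := card_eq_one.mp hcard
  refine ⟨p, fun i => ?_⟩
  have hi : f i = 1 ↔ i = p := by simpa using Finset.ext_iff.mp hp i
  rcases hf i with h | h <;> simp_all

lemma eq_ite_of_sum_eq_ite {α β : Type*} [Fintype α] [Fintype β] [DecidableEq α] [DecidableEq β]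
    {f : α → β → R} (hf : ∀ a b, f a b = 0 ∨ f a b = 1) {a₀ : α} {b₀ : β}
    (hrow : ∀ a, ∑ b, f a b = if a = a₀ then 1 else 0)
    (hcol : ∀ b, ∑ a, f a b = if b = b₀ then 1 else 0) (a : α) (b : β) :
    f a b = if a = a₀ ∧ b = b₀ then 1 else 0 := by
  obtain ⟨p, hp⟩ := exists_eq_ite_of_sum_eq_one (f := fun q : α × β => f q.1 q.2)
    (fun q => hf q.1 q.2) (by simp [Fintype.sum_prod_type, hrow])
  have hp' : ∀ a b, f a b = if a = p.1 ∧ b = p.2 then 1 else 0 := fun a b => by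
    simpa [Prod.ext_iff] using hp (a, b)
  have h₁ : p.1 = a₀ := by simpa [hp', eq_comm] using hrow p.1
  have h₂ : p.2 = b₀ := by simpa [hp', eq_comm] using hcol p.2
  rw [hp', h₁, h₂]

end ZeroOne

lemma sum_Iic_ite_and {α R : Type*} [Preorder α] [LocallyFiniteOrderBot α] [DecidableEq α]
    [AddCommMonoidWithOne R] {a b : α} (hab : a ≤ b) (g : α) :
    ∑ g1 ∈ Iic g, (if g1 = a ∧ g = b then (1 : R) else 0) = if g = b then 1 else 0 := by
  by_cases hg : g = b
  · subst hg
    simp [hab]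
  · simp [hg]

section Flow

variable {R : Type*} [AddCommMonoidWithOne R] {T m : ℕ} {B : Fin (T + 1) → Fin m → Fin m → R}

lemma sum_sum_succ_eq_of_flow (hsupp : ∀ t g1 g2, ¬ g1 ≤ g2 → B t g1 g2 = 0)
    (hflow : ∀ (t : Fin T) (g : Fin m),
      ∑ g1 ∈ Iic g, B t.castSucc g1 g = ∑ g3 ∈ Ici g, B t.succ g g3) (t : Fin T) :
    ∑ g1, ∑ g2, B t.succ g1 g2 = ∑ g1, ∑ g2, B t.castSucc g1 g2 := by
  calc ∑ g1, ∑ g2, B t.succ g1 g2 = ∑ g1, ∑ g2 ∈ Ici g1, B t.succ g1 g2 :=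
        sum_congr rfl fun g1 _ =>
          (sum_subset (subset_univ _) fun g2 _ h => hsupp _ _ _ (by simpa using h)).symm
    _ = ∑ g2, ∑ g1 ∈ Iic g2, B t.castSucc g1 g2 := by simp only [hflow]
    _ = ∑ g2, ∑ g1, B t.castSucc g1 g2 :=
        sum_congr rfl fun g2 _ =>
          sum_subset (subset_univ _) fun g1 _ h => hsupp _ _ _ (by simpa using h)
    _ = ∑ g1, ∑ g2, B t.castSucc g1 g2 := sum_comm

variable [CharZero R] [NeZero m]

theorem exists_profile_of_integral_flow (hint : ∀ t g1 g2, B t g1 g2 = 0 ∨ B t g1 g2 = 1)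
    (hsupp : ∀ t g1 g2, ¬ g1 ≤ g2 → B t g1 g2 = 0)
    (hinit₀ : B 0 0 0 = 1) (hinit : ∀ g1 g2, 0 < g2 → B 0 g1 g2 = 0)
    (hflow : ∀ (t : Fin T) (g : Fin m),
      ∑ g1 ∈ Iic g, B t.castSucc g1 g = ∑ g3 ∈ Ici g, B t.succ g g3) :
    ∃ f : Fin (T + 1) → Fin m, Monotone f ∧ f 0 = 0 ∧
      ∀ t g1 g2, B t g1 g2 = if g1 = prevH f 0 t ∧ g2 = f t then 1 else 0 := by
  have hB₀ : ∀ g1 g2, B 0 g1 g2 = if g1 = 0 ∧ g2 = 0 then 1 else 0 := by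
    intro g1 g2
    by_cases h₂ : g2 = 0
    · by_cases h₁ : g1 = 0
      · simp [h₁, h₂, hinit₀]
      · simp [h₁, hsupp 0 g1 g2 (by simp [h₂, h₁])]
    · simp [h₂, hinit g1 g2 (Fin.pos_iff_ne_zero.mpr h₂)]
  have hmass : ∀ t, ∑ g1, ∑ g2, B t g1 g2 = 1 := by
    intro t
    induction t using Fin.induction with
    | zero => simp [hB₀, ite_and]
    | succ t ih => rwa [sum_sum_succ_eq_of_flow hsupp hflow]
  have hpair : ∀ t, ∃ p : Fin m × Fin m,
      ∀ g1 g2, B t g1 g2 = if g1 = p.1 ∧ g2 = p.2 then 1 else 0 := by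
    intro t
    obtain ⟨p, hp⟩ := exists_eq_ite_of_sum_eq_one (f := fun q : Fin m × Fin m => B t q.1 q.2)
      (fun q => hint t q.1 q.2) (by rw [Fintype.sum_prod_type]; exact hmass t)
    exact ⟨p, fun g1 g2 => by simpa [Prod.ext_iff] using hp (g1, g2)⟩
  choose p hp using hpair
  have hle : ∀ t, (p t).1 ≤ (p t).2 := fun t => by
    by_contra h
    simpa [hp] using hsupp t _ _ h
  have hstart : p 0 = (0, 0) := by
    have h := hB₀ (p 0).1 (p 0).2
    rw [hp] at h
    by_contra hne
    simp [Prod.ext_iff.not.mp hne] at h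
  have hlink : ∀ t : Fin T, (p t.succ).1 = (p t.castSucc).2 := fun t => by
    by_contra h
    exact (hle _).not_gt <| by
      simpa [hp, sum_Iic_ite_and (hle _), Ne.symm h] using hflow t (p t.castSucc).2
  refine ⟨fun t => (p t).2, Fin.monotone_iff_le_succ.mpr fun t => hlink t ▸ hle t.succ,
    by simp [hstart], fun t g1 g2 => ?_⟩
  have hprev : prevH (fun t => (p t).2) 0 t = (p t).1 := by
    induction t using Fin.cases with
    | zero => simp [prevH_zero, hstart]
    | succ s => rw [prevH_succ, hlink]
  rw [hp, hprev]

end Flow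

lemma prevH_le {k : ℕ} {α : Type} [Preorder α] {f : Fin (k + 1) → α} (hf : Monotone f) {z : α}
    (hz : z ≤ f 0) (t : Fin (k + 1)) : prevH f z t ≤ f t := by
  induction t using Fin.cases with
  | zero => rwa [prevH_zero]
  | succ s => exact prevH_succ f z s ▸ hf (Fin.castSucc_le_succ s)

lemma sum_sum_Iic_mul_ite_and {α R : Type*} [Fintype α] [Preorder α] [LocallyFiniteOrderBot α]
    [DecidableEq α] [NonAssocSemiring R] (c : α → α → R) {a b : α} (hab : a ≤ b) :
    ∑ h2, ∑ h1 ∈ Iic h2, c h1 h2 * (if h1 = a ∧ h2 = b then 1 else 0) = c a b := by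
  rw [sum_eq_single b (fun h2 _ hne => by simp [hne]) (by simp)]
  simp [hab]

lemma obj_profilePoint {T n m : ℕ} {D : Type} [Fintype D] [NeZero n] [NeZero m]
    (Dcost : Fin (T + 1) → D → Fin n → Fin n → ℝ)
    (Dexp : Fin (T + 1) → D → Fin n → Fin m → ℝ)
    (Bcost : Fin (T + 1) → Fin m → Fin m → ℝ)
    (Bexp : Fin (T + 1) → Fin m → ℝ)
    {hd : D → Fin (T + 1) → Fin n} {hb : Fin (T + 1) → Fin m}
    (hd_mono : ∀ d, Monotone (hd d)) (hb_mono : Monotone hb) :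
    obj Dcost Dexp Bcost Bexp (profilePoint hd hb) = profileCost Dcost Dexp Bcost Bexp hd hb := by
  have hd_le := fun d => prevH_le (hd_mono d) (Fin.zero_le _)
  have hb_le := prevH_le hb_mono (Fin.zero_le _)
  simp only [obj, profilePoint, profileCost, sum_sum_Iic_mul_ite_and _ (hd_le _ _),
    sum_sum_Iic_mul_ite_and (fun g1 g2 => Bcost _ g1 g2 + Bexp _ g2) (hb_le _)]
  simp only [ite_and, mul_ite, mul_one, mul_zero, sum_ite_irrel, sum_ite_eq', mem_univ,
    if_true, sum_const_zero, sum_add_distrib]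
  ring

theorem statement_11_general (T n m : ℕ) [NeZero n] [NeZero m]
    (D : Type) [Fintype D]
    (Dcost : Fin (T + 1) → D → Fin n → Fin n → ℝ)
    (Dexp : Fin (T + 1) → D → Fin n → Fin m → ℝ)
    (Bcost : Fin (T + 1) → Fin m → Fin m → ℝ)
    (Bexp : Fin (T + 1) → Fin m → ℝ)
    (x : DikePoint T n m D) (hx : memQ x) (hxInt : isIntegral x) :
    ∃ (hb : Fin (T + 1) → Fin m) (hd : D → Fin (T + 1) → Fin n),
      Monotone hb ∧ hb 0 = 0 ∧ (∀ d, Monotone (hd d) ∧ hd d 0 = 0) ∧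
      x = profilePoint hd hb ∧
      obj Dcost Dexp Bcost Bexp x = profileCost Dcost Dexp Bcost Bexp hd hb := by
  obtain ⟨-, -, -, hCYsupp, hBsupp, hCY₀, hCYinit, hB₀, hBinit, hCYflow, hCYlink, hBflow,
    hBlink⟩ := hx
  obtain ⟨hCYint, hBint, hDYint⟩ := hxInt
  obtain ⟨hb, hb_mono, hb_zero, hB⟩ :=
    exists_profile_of_integral_flow hBint hBsupp hB₀ hBinit hBflow
  choose hd hd_mono hd_zero hCY using fun d =>
    exists_profile_of_integral_flow (B := fun t h1 h2 => x.CY t d h1 h2) (hCYint · d)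
      (hCYsupp · d) (hCY₀ d) (hCYinit d) (hCYflow · d)
  have hDY : ∀ t d h g, x.DY t d h g = if h = hd d t ∧ g = hb t then 1 else 0 :=
    fun t d => eq_ite_of_sum_eq_ite (hDYint t d)
      (fun h => by simpa [hCY, sum_Iic_ite_and (prevH_le (hd_mono d) (Fin.zero_le _) t)]
        using (hCYlink t d h).symm)
      (fun g => by simpa [hB, sum_Iic_ite_and (prevH_le hb_mono (Fin.zero_le _) t)]
        using (hBlink t d g).symm)
  have hx_eq : x = profilePoint hd hb := by
    obtain ⟨CY, B, DY⟩ := x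
    simp only [profilePoint, DikePoint.mk.injEq]
    exact ⟨by ext t d h1 h2; exact hCY d t h1 h2, funext₃ hB, by ext t d h g; exact hDY t d h g⟩
  refine ⟨hb, hd, hb_mono, hb_zero, fun d => ⟨hd_mono d, hd_zero d⟩, hx_eq, ?_⟩
  rw [hx_eq, obj_profilePoint _ _ _ _ hd_mono hb_mono]

/-- integral feasible points yield profiles: every integral
point of `Q` is the 0-1 point associated with some barrier height profile and
some family of dike height profiles; in particular its objective value equals
the corresponding profile cost. -/
theorem statement_11 (T n m : ℕ) (hT : 1 ≤ T) [NeZero n] [NeZero m]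
    (D : Type) [Fintype D] [Nonempty D]
    (Dcost : Fin (T + 1) → D → Fin n → Fin n → ℝ)
    (Dexp : Fin (T + 1) → D → Fin n → Fin m → ℝ)
    (Bcost : Fin (T + 1) → Fin m → Fin m → ℝ)
    (Bexp : Fin (T + 1) → Fin m → ℝ)
    (hDcost : ∀ t d h1 h2, h1 ≤ h2 → 0 ≤ Dcost t d h1 h2)
    (hDexp : ∀ t d h g, 0 ≤ Dexp t d h g)
    (hBcost : ∀ t g1 g2, g1 ≤ g2 → 0 ≤ Bcost t g1 g2)
    (hBexp : ∀ t g, 0 ≤ Bexp t g)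
    (x : DikePoint T n m D) (hx : memQ x) (hxInt : isIntegral x) :
    ∃ (hb : Fin (T + 1) → Fin m) (hd : D → Fin (T + 1) → Fin n),
      Monotone hb ∧ hb 0 = 0 ∧ (∀ d, Monotone (hd d) ∧ hd d 0 = 0) ∧
      x = profilePoint hd hb ∧
      obj Dcost Dexp Bcost Bexp x = profileCost Dcost Dexp Bcost Bexp hd hb :=
  statement_11_general T n m D Dcost Dexp Bcost Bexp x hx hxInt
end
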